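/- arXiv:math/0102058 — 6 statements merged into one kernel-verified Lean document; each statement's English description precedes it below -/
import Mathlib

section
/- For infinite cardinals κ < λ, Pr(λ, κ) implies Ps(λ, κ). -/
open Cardinal Set

abbrev Ordi := Ordinal.{0}
abbrev Cardi := Cardinal.{0}

/-- the set of ordinals `s` has order type `δ`. -/
def OtpEq (s : Set Ordi) (δ : Ordi) : Prop := Nonempty (s ≃o Set.Iio δ)

/-- `f` is a partial function from `λ` to `λ`. -/
def PFDomRan (lam : Cardi) (f : Ordi →. Ordi) : Prop :=
  f.Dom ⊆ Set.Iio lam.ord ∧ ∀ a b, b ∈ f a → b < lam.ord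

/-- `f` is strictly increasing (on its domain). -/
def PFInc (f : Ordi →. Ordi) : Prop :=
  ∀ a b c d, c ∈ f a → d ∈ f b → a < b → c < d

/-- `f` is one-to-one (on its domain). -/
def PFInj (f : Ordi →. Ordi) : Prop :=
  ∀ a b c, c ∈ f a → c ∈ f b → a = b

/-- the partial function `g` extends the partial function `f`. -/
def PFLe (f g : Ordi →. Ordi) : Prop := ∀ a b, b ∈ f a → b ∈ g a

/-- the total function `g` extends the partial function `f`. -/
def TotalExt (g : Ordi → Ordi) (f : Ordi →. Ordi) : Prop :=
  ∀ a b, b ∈ f a → g a = b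

/-- `g` is a total function from `λ` to `λ`. -/
def TotalFn (lam : Cardi) (g : Ordi → Ordi) : Prop :=
  ∀ a < lam.ord, g a < lam.ord

/-- `g` is injective as a function from `λ` to `λ`. -/
def TotalInj (lam : Cardi) (g : Ordi → Ordi) : Prop :=
  Set.InjOn g (Set.Iio lam.ord)

def Pr (lam kap : Cardi) : Prop :=
  ∃ F : Set (Ordi →. Ordi),
    #F ≤ Cardinal.lift.{1} lam ∧
    (∀ f ∈ F, PFDomRan lam f ∧ PFInc f ∧ OtpEq f.Dom kap.ord) ∧
    (∀ f ∈ F, ∀ g ∈ F, f ≠ g →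
      #(↥(f.Dom ∩ g.Dom)) < Cardinal.lift.{1} kap) ∧
    (∀ g : Ordi →. Ordi, PFDomRan lam g → PFInc g →
      #(↥g.Dom) = Cardinal.lift.{1} lam → ∃ f ∈ F, PFLe f g)

def Ps (lam kap : Cardi) : Prop :=
  ∃ F : Set (Ordi →. Ordi),
    #F ≤ Cardinal.lift.{1} lam ∧
    (∀ f ∈ F, PFDomRan lam f ∧ PFInc f ∧ OtpEq f.Dom kap.ord) ∧
    (∀ f ∈ F, ∀ g ∈ F, f ≠ g →
      #(↥(f.Dom ∩ g.Dom)) < Cardinal.lift.{1} kap) ∧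
    (∀ g : Ordi → Ordi, TotalFn lam g → TotalInj lam g →
      ∃ f ∈ F, TotalExt g f)

def Pr' (lam : Cardi) (δ : Ordi) : Prop :=
  ∃ F : Set (Ordi →. Ordi),
    #F ≤ Cardinal.lift.{1} lam ∧
    (∀ f ∈ F, PFDomRan lam f ∧ PFInj f ∧ OtpEq f.Dom δ) ∧
    (∀ f ∈ F, ∀ g ∈ F, f ≠ g →
      (∃ c ∈ f.Dom, ∀ x ∈ f.Dom ∩ g.Dom, x < c) ∧
      (∃ c ∈ g.Dom, ∀ x ∈ f.Dom ∩ g.Dom, x < c)) ∧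
    (∀ g : Ordi →. Ordi, PFDomRan lam g → PFInj g →
      #(↥g.Dom) = Cardinal.lift.{1} lam → ∃ f ∈ F, PFLe f g)

def Ps' (lam : Cardi) (δ : Ordi) : Prop :=
  ∃ F : Set (Ordi →. Ordi),
    #F ≤ Cardinal.lift.{1} lam ∧
    (∀ f ∈ F, PFDomRan lam f ∧ PFInj f ∧ OtpEq f.Dom δ) ∧
    (∀ f ∈ F, ∀ g ∈ F, f ≠ g →
      (∃ c ∈ f.Dom, ∀ x ∈ f.Dom ∩ g.Dom, x < c) ∧
      (∃ c ∈ g.Dom, ∀ x ∈ f.Dom ∩ g.Dom, x < c)) ∧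
    (∀ g : Ordi → Ordi, TotalFn lam g → TotalInj lam g →
      ∃ f ∈ F, TotalExt g f)

def Pr3 (chi lam mu : Cardi) (α : Ordi) : Prop :=
  ∃ F : Set (Ordi →. Ordi),
    #F ≤ Cardinal.lift.{1} chi ∧
    (∀ f ∈ F, f.Dom ⊆ Set.Iio mu.ord ∧ (∀ a b, b ∈ f a → b < lam.ord) ∧
      OtpEq f.Dom α) ∧
    (∀ g : Ordi → Ordi, (∀ a < mu.ord, g a < lam.ord) →
      ∃ f ∈ F, TotalExt g f)

/-- weak embedding of graphs: injective, maps edges to edges. -/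
def WeakEmb {V W : Type*} (G : SimpleGraph V) (H : SimpleGraph W) (f : V → W) : Prop :=
  Function.Injective f ∧ ∀ a b, G.Adj a b → H.Adj (f a) (f b)

/-- strong embedding of graphs: injective, maps edges to edges and non-edges to non-edges. -/
def StrongEmb {V W : Type*} (G : SimpleGraph V) (H : SimpleGraph W) (f : V → W) : Prop :=
  Function.Injective f ∧ ∀ a b, G.Adj a b ↔ H.Adj (f a) (f b)

/-- the complete `(θ, κ)`-bipartite graph cannot be weakly embedded into `G`. -/
def NoKbip {V : Type} (G : SimpleGraph V) (θ κ : Cardi) : Prop :=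
  ¬ ∃ A B : Set V, Disjoint A B ∧ #A = θ ∧ #B = κ ∧
      ∀ a ∈ A, ∀ b ∈ B, G.Adj a b

/-- `G` is bipartite. -/
def IsBipartite {V : Type*} (G : SimpleGraph V) : Prop :=
  ∃ s : Set V, ∀ a b, G.Adj a b → (a ∈ s ↔ b ∉ s)

/-- `♣_S` where `S` is a set of ordinals below `λ`. -/
def Clubsuit (lam : Cardi) (S : Set Ordi) : Prop :=
  ∃ A : Ordi → Set Ordi,
    (∀ δ ∈ S, Order.IsSuccLimit δ →
      A δ ⊆ Set.Iio δ ∧ (∀ b < δ, ∃ x ∈ A δ, b < x)) ∧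
    (∀ X ⊆ Set.Iio lam.ord, (∀ b < lam.ord, ∃ x ∈ X, b < x) →
      ∃ δ ∈ S, Order.IsSuccLimit δ ∧ A δ ⊆ X)

noncomputable def Ubd (kap lam : Cardi) : Cardi :=
  sInf { c : Cardi | ∃ P : Set (Set Ordi), #P = Cardinal.lift.{1} c ∧
    (∀ A ∈ P, A ⊆ Set.Iio lam.ord ∧ #(↥A) = Cardinal.lift.{1} kap) ∧
    ∀ f : Ordi → Ordi, (∀ i < kap.ord, f i < lam.ord) →
      ∃ A ∈ P, ∀ b < kap.ord, ∃ i, b ≤ i ∧ i < kap.ord ∧ f i ∈ A }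

/-!
Ps(λ, κ) differs from Pr(λ, κ) only in asking less of the test functions, so the family witnessing
Pr(λ, κ) witnesses Ps(λ, κ) as soon as every injective `g : λ → λ` is strictly increasing on some
set of size `λ`: clause (e) applied to that restriction of `g` gives an `f` that `g` extends.

That every injective `g : λ → λ` is increasing on a set of size `λ` is a Dushnik–Miller type
fact. For regular `λ`, first thin the domain out until every point has fewer than `λ` points
below it in both orders; then the points at which `g` reaches a new record are unbounded, hence
`λ` many. For singular `λ`, the regular case with `ν = (|b| + ℵ₀)⁺ < λ` gives above any `b < λ` a
block of size `ν` on which `g` increases, inside some `(b, e]` in both coordinates. Blocks taken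
at a cofinal set of points `b`, each beyond the end `e` of the blocks before it (such a set exists
by Zorn's lemma), fit together into one set of size `λ`.
-/

universe u

section WellOrder

variable {α β : Type u}

def fewBelow [LT β] (κ : Cardinal.{u}) (k : α → β) (C : Set α) : Set α :=
  {a ∈ C | #{b ∈ C | k b < k a} < κ}

theorem mem_fewBelow_of_subset [LT β] {κ : Cardinal.{u}} {k : α → β} {C D : Set α}
    (hDC : D ⊆ C) {x : α} (hxD : x ∈ D) (hxC : x ∈ fewBelow κ k C) : x ∈ fewBelow κ k D :=
  ⟨hxD, (mk_le_mk_of_subset fun _ hb => mem_sep (hDC hb.1) hb.2).trans_lt hxC.2⟩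

theorem le_mk_fewBelow [LT β] [WellFoundedLT β] {κ : Cardinal.{u}} (k : α → β) {C : Set α}
    (hC : κ ≤ #C) : κ ≤ #(fewBelow κ k C) := by
  by_cases hsub : C ⊆ fewBelow κ k C
  · exact hC.trans (mk_le_mk_of_subset hsub)
  -- a point outside with least `k`-value has all its `k`-predecessors inside
  obtain ⟨a, ⟨haC, ha⟩, hmin⟩ :=
    (InvImage.wf k wellFounded_lt).has_min _ (Set.not_subset.1 hsub)
  have hlow : {b ∈ C | k b < k a} ⊆ fewBelow κ k C := fun b hb => by
    by_contra hb'
    exact hmin b ⟨hb.1, hb'⟩ hb.2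
  exact (not_lt.1 fun h => ha ⟨haC, h⟩).trans (mk_le_mk_of_subset hlow)

theorem mk_sep_le_lt_of_mem_fewBelow [LinearOrder β] {κ : Cardinal.{u}} (hκ : ℵ₀ ≤ κ)
    {k : α → β} {C : Set α} (hk : InjOn k C) {x : α} (hx : x ∈ fewBelow κ k C) :
    #{b ∈ C | k b ≤ k x} < κ := by
  have hsub : {b ∈ C | k b ≤ k x} ⊆ insert x {b ∈ C | k b < k x} := by
    rintro b ⟨hb, hle⟩
    rcases hle.lt_or_eq with hlt | heq
    · exact Or.inr ⟨hb, hlt⟩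
    · exact Or.inl (hk hb hx.1 heq)
  exact (mk_le_mk_of_subset hsub).trans_lt (mk_insert_le.trans_lt (add_one_lt_of_lt hκ hx.2))

theorem le_mk_records [LinearOrder α] [WellFoundedLT α] [LinearOrder β] {κ : Cardinal.{u}}
    (hκ : κ.IsRegular) {g : α → β} {C : Set α} (hg : InjOn g C)
    (hidx : C ⊆ fewBelow κ id C) (hval : C ⊆ fewBelow κ g C) (hC : κ ≤ #C) :
    κ ≤ #{x ∈ C | ∀ y ∈ C, y < x → g y < g x} := by
  set R := {x ∈ C | ∀ y ∈ C, y < x → g y < g x}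
  have hsmall : ∀ {ι : Set α} {t : α → Set α}, #ι < κ → (∀ i ∈ ι, #(t i) < κ) →
      #(⋃ i ∈ ι, t i) < κ := fun hι ht =>
    (card_biUnion_lt_iff_forall_of_isRegular hκ hι).2 ht
  have hunbdd : ∀ x ∈ C, ∃ r ∈ R, x ≤ r := by
    intro x hx
    by_contra! hR
    -- past `x` there are no records, so each value is dominated by a value at or below `x`
    have hdom : ∀ a ∈ C, ∃ y ∈ {y ∈ C | y ≤ x}, g a ≤ g y := by
      intro a
      induction a using WellFoundedLT.induction with
      | _ a ih =>
        intro ha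
        by_cases hax : a ≤ x
        · exact ⟨a, ⟨ha, hax⟩, le_rfl⟩
        obtain ⟨y, hy, hya, hgy⟩ : ∃ y ∈ C, y < a ∧ g a ≤ g y := by
          by_contra! h
          exact hax (hR a ⟨ha, h⟩).le
        obtain ⟨z, hz, hgz⟩ := ih y hya hy
        exact ⟨z, hz, hgy.trans hgz⟩
    have hcover : C ⊆ ⋃ y ∈ {y ∈ C | y ≤ x}, {a ∈ C | g a ≤ g y} := fun a ha => by
      obtain ⟨y, hy, hay⟩ := hdom a ha
      exact mem_biUnion hy ⟨ha, hay⟩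
    exact hC.not_gt <| (mk_le_mk_of_subset hcover).trans_lt <|
      hsmall (mk_sep_le_lt_of_mem_fewBelow hκ.aleph0_le (injOn_id _) (hidx hx))
        fun y hy => mk_sep_le_lt_of_mem_fewBelow hκ.aleph0_le hg (hval hy.1)
  by_contra! hR
  have hcover : C ⊆ ⋃ r ∈ R, {a ∈ C | a ≤ r} := fun a ha => by
    obtain ⟨r, hr, har⟩ := hunbdd a ha
    exact mem_biUnion hr ⟨ha, har⟩
  exact hC.not_gt <| (mk_le_mk_of_subset hcover).trans_lt <|
    hsmall hR fun r hr => mk_sep_le_lt_of_mem_fewBelow hκ.aleph0_le (injOn_id _) (hidx hr.1)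

theorem exists_subset_strictMonoOn [LinearOrder α] [WellFoundedLT α] [LinearOrder β]
    [WellFoundedLT β] {κ : Cardinal.{u}} (hκ : κ.IsRegular) {g : α → β} {C : Set α}
    (hg : InjOn g C) (hC : κ ≤ #C) : ∃ D ⊆ C, κ ≤ #D ∧ StrictMonoOn g D := by
  set C₁ := fewBelow κ g C
  set C₂ := fewBelow κ id C₁
  have hC₂ : C₂ ⊆ C := fun a ha => ha.1.1
  refine ⟨{x ∈ C₂ | ∀ y ∈ C₂, y < x → g y < g x}, fun x hx => hC₂ hx.1,
    le_mk_records hκ (hg.mono hC₂) (fun x hx => mem_fewBelow_of_subset (sep_subset _ _) hx hx)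
      (fun x hx => mem_fewBelow_of_subset hC₂ hx hx.1)
      (le_mk_fewBelow id (le_mk_fewBelow g hC)),
    fun x hx y hy hxy => hy.2 x hx.1 hxy⟩

end WellOrder

theorem exists_separated_cofinal {α : Type*} [LinearOrder α] {c : α} {F : α → α}
    (hF : MapsTo F (Iio c) (Iio c)) :
    ∃ B ⊆ Iio c, (∀ b ∈ B, ∀ b' ∈ B, b < b' → F b ≤ b') ∧ ∀ a < c, ∃ b ∈ B, a ≤ b := by
  set 𝒮 := {B : Set α | B ⊆ Iio c ∧ ∀ b ∈ B, ∀ b' ∈ B, b < b' → F b ≤ b'}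
  obtain ⟨B, ⟨hBc, hBsep⟩, hBmax⟩ := zorn_subset 𝒮 fun 𝒞 h𝒞 hchain => by
    refine ⟨⋃₀ 𝒞, ⟨sUnion_subset fun s hs => (h𝒞 hs).1, ?_⟩, fun s hs => subset_sUnion_of_mem hs⟩
    rintro b ⟨s, hs, hb⟩ b' ⟨s', hs', hb'⟩
    rcases hchain.total hs hs' with h | h
    · exact (h𝒞 hs').2 b (h hb) b' hb'
    · exact (h𝒞 hs).2 b hb b' (h hb')
  refine ⟨B, hBc, hBsep, fun a ha => ?_⟩
  by_contra! hBa
  -- `B` lies below `a`, so some `x ≥ a` lies above every `F b`, and `B ∪ {x}` is still in `𝒮`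
  obtain ⟨x, hax, hxc, hFx⟩ : ∃ x, a ≤ x ∧ x < c ∧ ∀ b ∈ B, F b ≤ x := by
    by_cases hmax : ∃ m ∈ B, ∀ b ∈ B, b ≤ m
    · obtain ⟨m, hm, hmax⟩ := hmax
      refine ⟨max a (F m), le_max_left _ _, max_lt ha (hF (hBc hm)), fun b hb => ?_⟩
      rcases (hmax b hb).lt_or_eq with hbm | rfl
      · exact (hBsep b hb m hm hbm).trans ((hBa m hm).le.trans (le_max_left _ _))
      · exact le_max_right _ _
    · push Not at hmax
      refine ⟨a, le_rfl, ha, fun b hb => ?_⟩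
      obtain ⟨b', hb', hbb'⟩ := hmax b hb
      exact (hBsep b hb b' hb' hbb').trans (hBa b' hb').le
  have hx𝒮 : insert x B ∈ 𝒮 := by
    refine ⟨insert_subset hxc hBc, ?_⟩
    rintro b (rfl | hb) b' (rfl | hb') hbb'
    · exact (hbb'.ne rfl).elim
    · exact ((hBa b' hb').trans_le hax |>.trans hbb').false.elim
    · exact hFx b hb
    · exact hBsep b hb b' hb' hbb'
  exact (hBa x (hBmax hx𝒮 (subset_insert x B) (mem_insert x B))).not_ge hax

theorem strictMonoOn_biUnion_of_separated {α : Type*} [LinearOrder α] {g F : α → α} {B : Set α}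
    {D : α → Set α} (hsep : ∀ b ∈ B, ∀ b' ∈ B, b < b' → F b ≤ b')
    (hD : ∀ b ∈ B, D b ⊆ {a | a ∈ Ioc b (F b) ∧ g a ∈ Ioc b (F b)})
    (hmono : ∀ b ∈ B, StrictMonoOn g (D b)) : StrictMonoOn g (⋃ b ∈ B, D b) := by
  intro x hx y hy hxy
  obtain ⟨b, hb, hxb⟩ := mem_iUnion₂.1 hx
  obtain ⟨b', hb', hyb'⟩ := mem_iUnion₂.1 hy
  have hx' := hD b hb hxb
  have hy' := hD b' hb' hyb'
  rcases lt_trichotomy b b' with hbb' | rfl | hb'b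
  · exact hx'.2.2.trans_lt ((hsep b hb b' hb' hbb').trans_lt hy'.2.1)
  · exact hmono b hb hxb hyb' hxy
  · exact (hxy.trans_le (hy'.1.2.trans ((hsep b' hb' b hb hb'b).trans hx'.1.1.le))).false.elim

section Ordinal

variable {κ : Cardinal.{u}} {g : Ordinal.{u} → Ordinal.{u}}

theorem exists_lt_ord_lift_lt_mk (hκ : ℵ₀ ≤ κ) (hsing : κ.ord.cof < κ)
    (hg : MapsTo g (Iio κ.ord) (Iio κ.ord)) {ν : Cardinal.{u}} (hν : ν < κ) :
    ∃ e < κ.ord, Cardinal.lift.{u + 1} ν < #{a | a ≤ e ∧ g a ≤ e} := by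
  by_contra! hsmall
  obtain ⟨s, hs, hscard⟩ := Order.exists_cof_eq (Iio κ.ord)
  have hcover : Iio κ.ord ⊆ ⋃ e : s, {a | a ≤ e.1.1 ∧ g a ≤ e.1.1} := fun a ha => by
    obtain ⟨e, he, hle⟩ := hs ⟨max a (g a), mem_Iio.2 (max_lt ha (hg ha))⟩
    exact mem_iUnion.2 ⟨⟨e, he⟩, le_of_max_le_left hle, le_of_max_le_right hle⟩
  have : Cardinal.lift.{u + 1} κ ≤ Cardinal.lift.{u + 1} (κ.ord.cof * ν) := by
    calc Cardinal.lift.{u + 1} κ = #(Iio κ.ord) := by rw [mk_Iio_ordinal, card_ord]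
      _ ≤ #s * ⨆ e : s, #{a | a ≤ e.1.1 ∧ g a ≤ e.1.1} :=
        (mk_le_mk_of_subset hcover).trans (mk_iUnion_le _)
      _ ≤ Cardinal.lift.{u + 1} κ.ord.cof * Cardinal.lift.{u + 1} ν := by
        rw [hscard, Ordinal.cof_Iio, ← Ordinal.lift_cof]
        gcongr
        exact ciSup_le' fun e => hsmall e.1.1 e.1.2
      _ = Cardinal.lift.{u + 1} (κ.ord.cof * ν) := (lift_mul _ _).symm
  exact (lift_le.1 this).not_gt (mul_lt_of_lt hκ hsing hν)

theorem mk_Iic_lt_lift {ν : Cardinal.{u}} (hν : ℵ₀ ≤ ν) {b : Ordinal.{u}} (hb : b.card < ν) :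
    #(Iic b) < Cardinal.lift.{u + 1} ν := by
  rw [← Order.Iio_succ, Order.succ_eq_add_one, mk_Iio_ordinal, Ordinal.card_add_one, lift_lt]
  exact add_one_lt_of_lt hν hb

theorem exists_strictMonoOn_block (hκ : ℵ₀ ≤ κ) (hsing : κ.ord.cof < κ)
    (hg : MapsTo g (Iio κ.ord) (Iio κ.ord)) (hinj : InjOn g (Iio κ.ord)) {ν : Cardinal.{u}}
    (hν : ν.IsRegular) (hνκ : ν < κ) {b : Ordinal.{u}} (hb : b.card < ν) :
    ∃ e < κ.ord, ∃ D ⊆ {a | a ∈ Ioc b e ∧ g a ∈ Ioc b e},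
      Cardinal.lift.{u + 1} ν ≤ #D ∧ StrictMonoOn g D := by
  obtain ⟨e, he, hE⟩ := exists_lt_ord_lift_lt_mk hκ hsing hg hνκ
  set E := {a | a ≤ e ∧ g a ≤ e}
  set low := {a | a ≤ e ∧ g a ≤ b}
  have hℵ₀ : ℵ₀ ≤ Cardinal.lift.{u + 1} ν := by simpa using hν.aleph0_le
  have hlow : #low < Cardinal.lift.{u + 1} ν := by
    rw [← mk_image_eq_of_injOn g low (hinj.mono fun a ha => ha.1.trans_lt he)]
    exact (mk_le_mk_of_subset (image_subset_iff.2 fun a ha => ha.2)).trans_lt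
      (mk_Iic_lt_lift hν.aleph0_le hb)
  have hblock : E \ (Iic b ∪ low) ⊆ {a | a ∈ Ioc b e ∧ g a ∈ Ioc b e} := by
    rintro a ⟨⟨hae, hgae⟩, hnot⟩
    simp only [mem_union, mem_Iic, mem_ofPred_eq, not_or, not_and, not_le, low] at hnot
    exact ⟨⟨hnot.1, hae⟩, hnot.2 hae, hgae⟩
  have hbig : Cardinal.lift.{u + 1} ν ≤ #{a | a ∈ Ioc b e ∧ g a ∈ Ioc b e} := by
    by_contra! hlt
    refine hE.not_ge ((le_mk_sdiff_add_mk E (Iic b ∪ low)).trans (add_lt_of_lt hℵ₀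
      ((mk_le_mk_of_subset hblock).trans_lt hlt) ?_).le)
    exact (mk_union_le _ _).trans_lt (add_lt_of_lt hℵ₀ (mk_Iic_lt_lift hν.aleph0_le hb) hlow)
  obtain ⟨D, hD, hDν, hmono⟩ := exists_subset_strictMonoOn hν.lift
    (hinj.mono fun a ha => ha.1.2.trans_lt he) hbig
  exact ⟨e, he, D, hD, hDν, hmono⟩

theorem succ_lt_of_cof_lt (hsing : κ.ord.cof < κ) {μ : Cardinal.{u}} (hμ : ℵ₀ ≤ μ) (hμκ : μ < κ) :
    Order.succ μ < κ :=
  (Order.succ_le_of_lt hμκ).lt_of_ne fun h => hsing.not_ge (h ▸ (isRegular_succ hμ).2)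

theorem exists_strictMonoOn_of_cof_lt (hκ : ℵ₀ ≤ κ) (hsing : κ.ord.cof < κ)
    (hg : MapsTo g (Iio κ.ord) (Iio κ.ord)) (hinj : InjOn g (Iio κ.ord)) :
    ∃ S ⊆ Iio κ.ord, Cardinal.lift.{u + 1} κ ≤ #S ∧ StrictMonoOn g S := by
  have hℵ₀ : ℵ₀ < κ := hκ.lt_of_ne fun h => hsing.ne (h ▸ isRegular_aleph0.cof_ord)
  have hblock (b : Ordinal.{u}) (hb : b < κ.ord) : ∃ e < κ.ord,
      ∃ D ⊆ {a | a ∈ Ioc b e ∧ g a ∈ Ioc b e},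
        Cardinal.lift.{u + 1} (Order.succ (b.card ⊔ ℵ₀)) ≤ #D ∧ StrictMonoOn g D :=
    exists_strictMonoOn_block hκ hsing hg hinj (isRegular_succ le_sup_right)
      (succ_lt_of_cof_lt hsing le_sup_right (max_lt (lt_ord.1 hb) hℵ₀))
      (Order.lt_succ_of_le le_sup_left)
  choose! F hF D hD hDcard hDmono using hblock
  obtain ⟨B, hB, hsep, hcof⟩ := exists_separated_cofinal (c := κ.ord) hF
  refine ⟨⋃ b ∈ B, D b,
    iUnion₂_subset fun b hb a ha => (hD b (hB hb) ha).1.2.trans_lt (hF b (hB hb)), ?_, ?_⟩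
  · by_contra! hsmall
    obtain ⟨ρ, hρ, hρS⟩ := lt_lift_iff.1 hsmall
    obtain ⟨b, hb, hρb⟩ := hcof ρ.ord (ord_lt_ord.2 hρ)
    refine (?_ : Cardinal.lift.{u + 1} ρ < #(⋃ b ∈ B, D b)).ne hρS
    calc Cardinal.lift.{u + 1} ρ ≤ Cardinal.lift.{u + 1} (b.card ⊔ ℵ₀) :=
          lift_le.2 ((card_ord ρ ▸ Ordinal.card_le_card hρb).trans le_sup_left)
      _ < Cardinal.lift.{u + 1} (Order.succ (b.card ⊔ ℵ₀)) := lift_lt.2 (Order.lt_succ _)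
      _ ≤ #(D b) := hDcard b (hB hb)
      _ ≤ #(⋃ b ∈ B, D b) := mk_le_mk_of_subset (subset_biUnion_of_mem hb)
  · exact strictMonoOn_biUnion_of_separated hsep (fun b hb => hD b (hB hb))
      fun b hb => hDmono b (hB hb)

theorem exists_strictMonoOn_of_injOn (hκ : ℵ₀ ≤ κ) (hg : MapsTo g (Iio κ.ord) (Iio κ.ord))
    (hinj : InjOn g (Iio κ.ord)) :
    ∃ S ⊆ Iio κ.ord, #S = Cardinal.lift.{u + 1} κ ∧ StrictMonoOn g S := by
  have hmk : #(Iio κ.ord) = Cardinal.lift.{u + 1} κ := by rw [mk_Iio_ordinal, card_ord]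
  obtain ⟨S, hS, hκS, hmono⟩ : ∃ S ⊆ Iio κ.ord, Cardinal.lift.{u + 1} κ ≤ #S ∧
      StrictMonoOn g S := by
    rcases (Ordinal.cof_ord_le κ).lt_or_eq with hsing | hreg
    · exact exists_strictMonoOn_of_cof_lt hκ hsing hg hinj
    · exact exists_subset_strictMonoOn (IsRegular.lift ⟨hκ, hreg.ge⟩) hinj hmk.ge
  exact ⟨S, hS, le_antisymm (hmk ▸ mk_le_mk_of_subset hS) hκS, hmono⟩

end Ordinal

/-- Pr(λ, κ) implies Ps(λ, κ). -/
theorem stmt_2 (lam kap : Cardi) (h0 : ℵ₀ ≤ kap) (h1 : kap < lam)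
    (h : Pr lam kap) : Ps lam kap := by
  obtain ⟨F, hFcard, hF, hFdisj, hFext⟩ := h
  refine ⟨F, hFcard, hF, hFdisj, fun g hg hinj => ?_⟩
  obtain ⟨S, hS, hScard, hmono⟩ :=
    exists_strictMonoOn_of_injOn (h0.trans h1.le) (fun a ha => hg a ha) hinj
  have hres (a b : Ordi) : b ∈ PFun.res g S a ↔ a ∈ S ∧ g a = b := PFun.mem_res g S a b
  have hinc : PFInc (PFun.res g S) := by
    intro a b c d hc hd hab
    obtain ⟨ha, rfl⟩ := (hres a c).1 hc
    obtain ⟨hb, rfl⟩ := (hres b d).1 hd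
    exact hmono ha hb hab
  have hdomran : PFDomRan lam (PFun.res g S) := by
    refine ⟨hS, fun a b hb => ?_⟩
    obtain ⟨ha, rfl⟩ := (hres a b).1 hb
    exact hg a (hS ha)
  obtain ⟨f, hf, hfg⟩ := hFext _ hdomran hinc hScard
  exact ⟨f, hf, fun a b hb => ((hres a b).1 (hfg a b hb)).2⟩
end

section
/- For every infinite cardinal κ and every injective function f : κ → Ordinals, there exists a subset A of κ of cardinality κ such that f restricted to A is strictly increasing. -/
/-!
A point `x` with `f x < f y` for every `y > x` (a record of `f`) exists past any given point,
since a point of least value among those past `x` with value at most `f x` is one; the records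
form a cofinal set on which `f` increases, which settles the case of regular `κ`.

For singular `κ` we run along a cofinal subset `S` of `κ` of order type `cf κ`, choosing at
`i ∈ S` a block `A i` of regular size `θ i < κ` (with the `θ i` unbounded in `κ`) on which `f`
increases and which avoids every point lying below an earlier block in position or in value.
Each block can be taken inside an initial segment in position and in value of size `< κ`, so
fewer than `cf κ` blocks bound fewer than `κ` points and there is always room for the next one.
The union of the blocks is then increasing and has size `κ`.
-/

open Cardinal Order Ordinal Set Function

universe u v

section Records

variable {α : Type u} {β : Type v} [LinearOrder α] [LinearOrder β]

def records (f : α → β) : Set α := {x | ∀ y, x < y → f x < f y}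

theorem strictMonoOn_records (f : α → β) : StrictMonoOn f (records f) :=
  fun _ hx _ _ hxy => hx _ hxy

theorem isCofinal_records [WellFoundedLT β] {f : α → β} (hf : Injective f) :
    IsCofinal (records f) := by
  intro x
  obtain ⟨a, ⟨hxa, hax⟩, hmin⟩ :=
    (InvImage.wf f wellFounded_lt).has_min {y | x ≤ y ∧ f y ≤ f x} ⟨x, le_rfl, le_rfl⟩
  refine ⟨a, fun y hay => ?_, hxa⟩
  by_contra! hya
  exact hmin y ⟨hxa.trans hay.le, hya.trans hax⟩ (hya.lt_of_ne (hf.ne hay.ne'))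

end Records

theorem ord_lt_type_of_lt_mk {α : Type u} {r : α → α → Prop} [IsWellOrder α r]
    {c : Cardinal.{u}} (hc : c < #α) : c.ord < type r :=
  (ord_lt_ord.2 (hc.trans_eq (card_type r).symm)).trans_le (ord_card_le _)

theorem mk_iUnion_lt_of_lt_cof {α ι : Type u} {κ : Cardinal.{u}} (hκ : ℵ₀ ≤ κ)
    {s : ι → Set α} (hι : #ι < κ.ord.cof) (hs : ∀ i, #(s i) < κ) : #(⋃ i, s i) < κ :=
  (mk_iUnion_le s).trans_lt
    (mul_lt_of_lt hκ (hι.trans_le (cof_ord_le κ)) (iSup_lt_of_lt_cof_ord hι hs))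

section WellOrderedValues

variable {β : Type v} [LinearOrder β] [WellFoundedLT β]

theorem exists_mk_setOf_lt_eq {α : Type u} {f : α → β} (hf : Injective f)
    {ν : Cardinal.{u}} (hν : ν < #α) : ∃ x, #{y | f y < f x} = ν := by
  let r : α → α → Prop := f ⁻¹'o (· < ·)
  have : IsWellOrder α r := (RelEmbedding.preimage ⟨f, hf⟩ (· < ·)).isWellOrder
  obtain ⟨x, hx⟩ := typein_surj r (ord_lt_type_of_lt_mk hν)
  exact ⟨x, (card_typein x).symm.trans (by rw [hx, card_ord])⟩

theorem exists_strictMonoOn_of_isRegular {κ : Cardinal.{u}} (hκ : κ.IsRegular)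
    {f : κ.ord.ToType → β} (hf : Injective f) :
    ∃ A : Set κ.ord.ToType, #A = κ ∧ StrictMonoOn f A := by
  refine ⟨records f, le_antisymm ?_ ?_, strictMonoOn_records f⟩
  · simpa using mk_set_le (records f)
  · simpa [hκ.cof_ord] using cof_le (isCofinal_records hf)

theorem exists_strictMonoOn_subset_of_isRegular {α : Type u} [LinearOrder α] [WellFoundedLT α]
    {f : α → β} (hf : Injective f) {θ : Cardinal.{u}} (hθ : θ.IsRegular) {T : Set α}
    (hT : θ < #T) : ∃ A ⊆ T, ∃ p, #A = θ ∧ StrictMonoOn f A ∧ ∀ a ∈ A, a < p := by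
  obtain ⟨g⟩ := type_lt_iff.1 (by rw [type_toType]; exact ord_lt_type_of_lt_mk hT :
    typeLT θ.ord.ToType < typeLT T)
  let e : θ.ord.ToType → α := fun b => g b
  have he : StrictMono e := fun b c h => g.map_rel_iff.2 h
  obtain ⟨A, hA, hmono⟩ := exists_strictMonoOn_of_isRegular hθ (hf.comp he.injective)
  refine ⟨e '' A, ?_, g.top, ?_, ?_, ?_⟩
  · rintro _ ⟨b, -, rfl⟩
    exact (g b).2
  · rw [mk_image_eq he.injective, hA]
  · rintro _ ⟨b, hb, rfl⟩ _ ⟨c, hc, rfl⟩ h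
    exact hmono hb hc (he.lt_iff_lt.1 h)
  · rintro _ ⟨b, -, rfl⟩
    exact g.lt_top b

end WellOrderedValues

section LowerCone

variable {α : Type u} {β : Type v} [LinearOrder α] [LinearOrder β]

def lowerCone (f : α → β) (A : Set α) : Set α := {x | ∃ a ∈ A, x ≤ a ∨ f x ≤ f a}

theorem lt_and_lt_of_notMem_lowerCone {f : α → β} {A : Set α} {a b : α} (ha : a ∈ A)
    (hb : b ∉ lowerCone f A) : a < b ∧ f a < f b := by
  constructor <;> by_contra! h
  · exact hb ⟨a, ha, Or.inl h⟩
  · exact hb ⟨a, ha, Or.inr h⟩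

theorem strictMonoOn_iUnion_of_disjoint_lowerCone {I : Type*} [LinearOrder I] {f : α → β}
    {A : I → Set α} (hdisj : ∀ i, Disjoint (A i) (⋃ j : Iio i, lowerCone f (A j)))
    (hmono : ∀ i, StrictMonoOn f (A i)) : StrictMonoOn f (⋃ i, A i) := by
  have hsep : ∀ {i j : I}, j < i → ∀ a ∈ A j, ∀ b ∈ A i, a < b ∧ f a < f b :=
    fun {i j} hji a ha b hb => lt_and_lt_of_notMem_lowerCone ha fun hb' =>
      disjoint_left.1 (hdisj i) hb (mem_iUnion.2 ⟨⟨j, hji⟩, hb'⟩)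
  intro a ha b hb hab
  obtain ⟨i, ha⟩ := mem_iUnion.1 ha
  obtain ⟨j, hb⟩ := mem_iUnion.1 hb
  rcases lt_trichotomy i j with hij | rfl | hji
  · exact (hsep hij a ha b hb).2
  · exact hmono i ha hb hab
  · exact absurd hab (hsep hji b hb a ha).1.not_gt

end LowerCone

section LimitCardinal

variable {β : Type v} [LinearOrder β] [WellFoundedLT β] {κ : Cardinal.{u}}
  {f : κ.ord.ToType → β}

theorem exists_disjoint_strictMonoOn_mk_lowerCone_lt (hκ : ℵ₀ < κ) (hlim : IsSuccLimit κ)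
    (hf : Injective f) {θ : Cardinal.{u}} (hθ : θ.IsRegular) (hθκ : θ < κ)
    {B : Set κ.ord.ToType} (hB : #B < κ) :
    ∃ A, Disjoint A B ∧ #A = θ ∧ StrictMonoOn f A ∧ #(lowerCone f A) < κ := by
  set μ := max (max θ #B) ℵ₀
  have hμ : μ < κ := max_lt (max_lt hθκ hB) hκ
  obtain ⟨x, hx⟩ := exists_mk_setOf_lt_eq hf (ν := succ μ) (by simpa using hlim.succ_lt hμ)
  set T := {y | f y < f x} \ B
  have hT : θ < #T := by
    by_contra! hT
    refine (le_mk_sdiff_add_mk {y | f y < f x} B).not_gt ?_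
    rw [hx]
    exact add_lt_of_lt (le_max_right _ _ |>.trans (le_succ μ))
      (hT.trans_lt ((le_max_left _ _).trans (le_max_left _ _) |>.trans_lt (lt_succ μ)))
      ((le_max_right _ _).trans (le_max_left _ _) |>.trans_lt (lt_succ μ))
  obtain ⟨A, hAT, p, hA, hmono, hp⟩ := exists_strictMonoOn_subset_of_isRegular hf hθ hT
  refine ⟨A, disjoint_left.2 fun a ha => (hAT ha).2, hA, hmono, ?_⟩
  have hcone : lowerCone f A ⊆ Iio p ∪ {y | f y < f x} := by
    rintro y ⟨a, ha, hya | hya⟩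
    · exact Or.inl (hya.trans_lt (hp a ha))
    · exact Or.inr (hya.trans_lt (hAT ha).1)
  refine (mk_le_mk_of_subset hcone).trans_lt ((mk_union_le _ _).trans_lt ?_)
  refine add_lt_of_lt hκ.le (by simpa using mk_Iio_lt p (by simp)) ?_
  rw [hx]
  exact hlim.succ_lt hμ

theorem exists_blocks_disjoint_lowerCone (hκ : ℵ₀ < κ) (hlim : IsSuccLimit κ) (hf : Injective f)
    {I : Type u} [LinearOrder I] [WellFoundedLT I] (hI : ∀ i : I, #(Iio i) < κ.ord.cof)
    {θ : I → Cardinal.{u}} (hθ : ∀ i, (θ i).IsRegular) (hθκ : ∀ i, θ i < κ) :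
    ∃ A : I → Set κ.ord.ToType, ∀ i, Disjoint (A i) (⋃ j : Iio i, lowerCone f (A j)) ∧
      #(A i) = θ i ∧ StrictMonoOn f (A i) := by
  have hstep : ∀ i (B : Set κ.ord.ToType), ∃ A, #B < κ →
      Disjoint A B ∧ #A = θ i ∧ StrictMonoOn f A ∧ #(lowerCone f A) < κ := by
    intro i B
    by_cases hB : #B < κ
    · obtain ⟨A, hA⟩ :=
        exists_disjoint_strictMonoOn_mk_lowerCone_lt hκ hlim hf (hθ i) (hθκ i) hB
      exact ⟨A, fun _ => hA⟩
    · exact ⟨∅, fun h => absurd h hB⟩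
  choose step hstep using hstep
  let A : I → Set κ.ord.ToType := WellFoundedLT.fix (motive := fun _ => Set κ.ord.ToType)
    fun i prev => step i (⋃ j : Iio i, lowerCone f (prev j j.2))
  have hA : ∀ i, A i = step i (⋃ j : Iio i, lowerCone f (A j)) := WellFoundedLT.fix_eq _
  have hsmall : ∀ i, #(⋃ j : Iio i, lowerCone f (A j.1)) < κ := by
    intro i
    induction i using WellFoundedLT.induction with
    | _ i ih =>
      refine mk_iUnion_lt_of_lt_cof hκ.le (hI i) fun j => ?_
      rw [hA j]
      exact (hstep j _ (ih j j.2)).2.2.2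
  refine ⟨A, fun i => ?_⟩
  rw [hA i]
  obtain ⟨hdisj, hcard, hmono, -⟩ := hstep i _ (hsmall i)
  exact ⟨hdisj, hcard, hmono⟩

theorem exists_strictMonoOn_of_isSuccLimit (hκ : ℵ₀ < κ) (hlim : IsSuccLimit κ)
    (hf : Injective f) : ∃ A : Set κ.ord.ToType, #A = κ ∧ StrictMonoOn f A := by
  obtain ⟨S, hS, hStype⟩ := exists_ord_cof_eq κ.ord.ToType
  rw [cof_toType] at hStype
  have hSmk : #S = κ.ord.cof := by rw [← card_type (α := S) (· < ·), hStype, card_ord]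
  have hIio : ∀ i : S, #(Iio i) < κ.ord.cof := fun i => by
    simpa [hSmk] using mk_Iio_lt i (by rw [hSmk, hStype])
  let θ : S → Cardinal.{u} := fun i => succ (max #(Iio (i : κ.ord.ToType)) ℵ₀)
  obtain ⟨A, hA⟩ := exists_blocks_disjoint_lowerCone hκ hlim hf hIio (θ := θ)
    (fun i => isRegular_succ (le_max_right _ _))
    (fun i => hlim.succ_lt (max_lt (by simpa using mk_Iio_lt (i : κ.ord.ToType) (by simp)) hκ))
  refine ⟨⋃ i, A i, le_antisymm (by simpa using mk_set_le (⋃ i, A i)) ?_,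
    strictMonoOn_iUnion_of_disjoint_lowerCone (fun i => (hA i).1) (fun i => (hA i).2.2)⟩
  refine le_of_forall_lt fun μ hμ => ?_
  obtain ⟨x, hx⟩ := exists_mk_setOf_lt_eq (α := κ.ord.ToType) (f := id) injective_id
    (by simpa using hμ)
  obtain ⟨i, hi, hxi⟩ := hS x
  calc μ = #(Iio x) := hx.symm
    _ ≤ #(Iio i) := mk_le_mk_of_subset (Iio_subset_Iio hxi)
    _ < θ ⟨i, hi⟩ := (le_max_left _ _).trans_lt (lt_succ _)
    _ = #(A ⟨i, hi⟩) := (hA _).2.1.symm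
    _ ≤ #(⋃ i, A i) := mk_le_mk_of_subset (subset_iUnion A _)

end LimitCardinal

/-- For every infinite cardinal `κ` and injective `f : κ → Ordinal` there is a subset `A`
of `κ` of cardinality `κ` on which `f` is strictly increasing. -/
theorem stmt_4 (kap : Cardinal.{0}) (hkap : ℵ₀ ≤ kap)
    (f : kap.ord.ToType → Ordinal.{0}) (hf : Function.Injective f) :
    ∃ A : Set kap.ord.ToType, #A = kap ∧ StrictMonoOn f A := by
  rcases isRegular_or_isSingular hkap with hreg | hsing
  · exact exists_strictMonoOn_of_isRegular hreg hf
  · have hκ : ℵ₀ < kap := hkap.lt_of_ne fun h => not_isSingular_aleph0 (h ▸ hsing)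
    exact exists_strictMonoOn_of_isSuccLimit hκ hsing.isSuccLimit hf
end

section
/- If Ps'(λ, κ) holds for infinite cardinals κ < λ, then Ps(λ, κ) holds. -/
open Cardinal Set

/-!
An injective map `g` from a well-order of infinite size `κ` into a well-order is strictly
increasing on some subset of size `κ`. First shrink the domain so that every proper initial
segment, both in its own order and in the order pulled back along `g`, has size `< κ`.
If `κ` is regular, the records (points after which `g` only increases) are cofinal, hence there
are `κ` of them. If `κ` is singular, pick by transfinite recursion of length `cf κ` blocks whose
sizes are cofinal in `κ`, each increasing by induction on `κ` and bounded in both orders, and each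
lying above all earlier blocks in both orders; their union is increasing of size `κ`.
Restricting every function of a `Ps'(λ, κ)` family to such a subset of its domain gives a
`Ps(λ, κ)` family: the domains keep order type `κ`, and domain intersections bounded in one
domain have size `< κ`.
-/

universe u

section SmallInitialSegments

variable {α : Type u} {γ : Type*}

theorem mk_sep_le_mk_sep {s t : Set α} (hts : t ⊆ s) (p : α → Prop) :
    #{y ∈ t | p y} ≤ #{y ∈ s | p y} :=
  mk_le_mk_of_subset fun _ hy => ⟨hts hy.1, hy.2⟩

def SmallInitialSegments [LT γ] (f : α → γ) (s : Set α) : Prop :=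
  ∀ x ∈ s, #{y ∈ s | f y < f x} < #s

theorem SmallInitialSegments.mono [LT γ] {f : α → γ} {s t : Set α}
    (hs : SmallInitialSegments f s) (hts : t ⊆ s) (hcard : #t = #s) :
    SmallInitialSegments f t := fun x hx =>
  hcard ▸ (mk_sep_le_mk_sep hts _).trans_lt (hs x (hts hx))

theorem mk_subtype_lt_eq [LT γ] (f : α → γ) (s : Set α) (x : s) :
    #{y : s // f y < f x} = #{y ∈ s | f y < f x} :=
  mk_congr (Equiv.subtypeSubtypeEquivSubtypeInter (· ∈ s) fun y => f y < f x)

theorem SmallInitialSegments.exists_forall_lt [LinearOrder γ] {f : α → γ} {s : Set α}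
    (hs : SmallInitialSegments f s) (hf : InjOn f s) (hκ : ℵ₀ ≤ #s) {ι : Type u} (x : ι → α)
    (hx : ∀ i, x i ∈ s) (hι : #ι < (#s).ord.cof) : ∃ p ∈ s, ∀ i, f (x i) < f p := by
  by_contra! h
  have hcover : s ⊆ ⋃ i, insert (x i) {y ∈ s | f y < f (x i)} := fun p hp => by
    obtain ⟨i, hi⟩ := h p hp
    rcases hi.lt_or_eq with hlt | heq
    · exact mem_iUnion.2 ⟨i, Or.inr ⟨hp, hlt⟩⟩
    · exact mem_iUnion.2 ⟨i, Or.inl (hf hp (hx i) heq)⟩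
  have hpiece : ∀ i, #(insert (x i) {y ∈ s | f y < f (x i)} : Set α) < #s := fun i =>
    mk_insert_le.trans_lt (add_one_lt_of_lt hκ (hs _ (hx i)))
  exact ((mk_le_mk_of_subset hcover).trans (mk_iUnion_le _)).not_gt
    (mul_lt_of_lt hκ (hι.trans_le (Ordinal.cof_ord_le _)) (iSup_lt_of_lt_cof_ord hι hpiece))

variable [LinearOrder γ] [WellFoundedLT γ]

theorem exists_le_mk_setOf_lt {f : α → γ} {s : Set α} (hf : InjOn f s) {c : Cardinal}
    (hc : c < #s) : ∃ x ∈ s, c ≤ #{y ∈ s | f y < f x} := by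
  let e : s ↪ γ := ⟨fun x => f x, hf.injective⟩
  let r : s → s → Prop := e ⁻¹'o (· < ·)
  have : IsWellOrder s r := (RelEmbedding.preimage e (· < ·)).isWellOrder
  have hlt : c.ord < Ordinal.type r :=
    (ord_lt_ord.2 (hc.trans_eq (Ordinal.card_type r).symm)).trans_le (ord_card_le _)
  obtain ⟨x, hx⟩ := Ordinal.typein_surj r hlt
  have hcard := Ordinal.card_typein (r := r) x
  rw [hx, card_ord] at hcard
  exact ⟨x, x.2, hcard.trans_le (mk_subtype_lt_eq f s x).le⟩

theorem exists_subset_smallInitialSegments (f : α → γ) (s : Set α) :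
    ∃ t ⊆ s, #t = #s ∧ SmallInitialSegments f t := by
  set t := {x ∈ s | #{y ∈ s | f y < f x} < #s}
  have ht : #t = #s := by
    rcases (s \ t).eq_empty_or_nonempty with h | h
    · rw [Set.sdiff_eq_empty.1 h |>.antisymm (sep_subset _ _)]
    · set b := Function.argminOn f (s \ t) h
      have hb : b ∈ s \ t := Function.argminOn_mem f _ h
      have hsub : {y ∈ s | f y < f b} ⊆ t := fun y hy => by
        by_contra hyt
        exact Function.not_lt_argminOn f (s \ t) ⟨hy.1, hyt⟩ hy.2
      refine (mk_le_mk_of_subset (sep_subset _ _)).antisymm ?_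
      exact (not_lt.1 fun hlt => hb.2 ⟨hb.1, hlt⟩).trans (mk_le_mk_of_subset hsub)
  exact ⟨t, sep_subset _ _, ht, fun x hx =>
    ht ▸ (mk_sep_le_mk_sep (sep_subset _ _) _).trans_lt hx.2⟩

end SmallInitialSegments

theorem exists_transfinite_choice {ι X : Type*} [Preorder ι] [WellFoundedLT ι] [Nonempty X]
    (Φ : (i : ι) → (Iio i → X) → X → Prop)
    (h : ∀ i (b : Iio i → X), (∀ j : Iio i, Φ j (fun k => b ⟨k, k.2.trans j.2⟩) (b j)) →
      ∃ x, Φ i b x) :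
    ∃ b : ι → X, ∀ i, Φ i (fun j => b j) (b i) := by
  let b : ι → X := WellFoundedLT.fix fun i prev => Classical.epsilon (Φ i fun j => prev j j.2)
  have hb : ∀ i, b i = Classical.epsilon (Φ i fun j => b j) := WellFoundedLT.fix_eq _
  refine ⟨b, fun i => ?_⟩
  induction i using WellFoundedLT.induction with
  | ind i ih =>
    rw [hb i]
    exact Classical.epsilon_spec (h i _ fun j => ih j j.2)

section WellOrder

variable {α : Type u} {β : Type*} [LinearOrder α] [LinearOrder β] {s : Set α} {g : α → β}

open scoped Ordinal in
theorem smallInitialSegments_id_iff [WellFoundedLT α] (s : Set α) :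
    SmallInitialSegments id s ↔ typeLT s = (#s).ord := by
  refine ⟨fun h => le_antisymm ?_ (ord_le.2 (Ordinal.card_type _).ge), fun h x hx => ?_⟩
  · by_contra! hlt
    obtain ⟨x, hx⟩ := Ordinal.typein_surj _ hlt
    have hcard := Ordinal.card_typein (r := ((· < ·) : s → s → Prop)) x
    rw [hx, card_ord] at hcard
    exact (h x x.2).ne ((mk_subtype_lt_eq id s x).symm.trans hcard.symm)
  · exact (mk_subtype_lt_eq id s ⟨x, hx⟩) ▸ mk_Iio_lt (⟨x, hx⟩ : s) h.symm

theorem exists_strictMonoOn_of_isRegular_s5 [WellFoundedLT β] (hreg : (#s).IsRegular)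
    (hs : SmallInitialSegments id s) (hg : InjOn g s) :
    ∃ u ⊆ s, #u = #s ∧ StrictMonoOn g u := by
  set R := {x ∈ s | ∀ y ∈ s, x < y → g x < g y}
  refine ⟨R, sep_subset _ _, (mk_le_mk_of_subset (sep_subset _ _)).antisymm ?_,
    fun x hx y hy hxy => hx.2 y hy.1 hxy⟩
  by_contra! hR
  obtain ⟨p, hp, hpR⟩ := hs.exists_forall_lt (injOn_id s) hreg.aleph0_le ((↑) : R → α)
    (fun r => r.2.1) (by rwa [hreg.cof_ord])
  -- the `g`-least element beyond `p` is a record, yet it is not below `p`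
  set m := Function.argminOn g {y ∈ s | p ≤ y} ⟨p, hp, le_rfl⟩
  have hm : m ∈ {y ∈ s | p ≤ y} := Function.argminOn_mem _ _ _
  have hmR : m ∈ R := ⟨hm.1, fun y hy hmy =>
    (Function.argminOn_le g {y ∈ s | p ≤ y} ⟨hy, hm.2.trans hmy.le⟩).lt_of_ne
      fun h => hmy.ne (hg hm.1 hy h)⟩
  exact (hpR ⟨m, hmR⟩).not_ge hm.2

def upperRegion (s : Set α) (g : α → β) (P : Set α) : Set α :=
  {x ∈ s | ∀ y ∈ P, y < x ∧ g y < g x}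

def IsBoundedIn (s : Set α) (g : α → β) (C : Set α) : Prop :=
  ∃ p ∈ s, ∃ q ∈ s, ∀ x ∈ C, x < p ∧ g x < g q

theorem mk_upperRegion (hx : SmallInitialSegments id s) (hy : SmallInitialSegments g s)
    (hκ : ℵ₀ ≤ #s) {P : Set α} (hP : IsBoundedIn s g P) : #(upperRegion s g P) = #s := by
  obtain ⟨p, hp, q, hq, hPpq⟩ := hP
  refine (mk_le_mk_of_subset (sep_subset _ _)).antisymm (not_lt.1 fun hlt => ?_)
  have hcover : s ⊆ upperRegion s g P ∪ ({y ∈ s | y < p} ∪ {y ∈ s | g y < g q}) :=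
    fun x hxs => or_iff_not_imp_left.2 fun hxP => by
      by_contra hout
      exact hxP ⟨hxs, fun y hyP =>
        ⟨not_le.1 fun hxy => hout (Or.inl ⟨hxs, hxy.trans_lt (hPpq y hyP).1⟩),
          not_le.1 fun hxy => hout (Or.inr ⟨hxs, hxy.trans_lt (hPpq y hyP).2⟩)⟩⟩
  refine ((mk_le_mk_of_subset hcover).trans ((mk_union_le _ _).trans
    (add_le_add le_rfl (mk_union_le _ _)))).not_gt ?_
  exact add_lt_of_lt hκ hlt (add_lt_of_lt hκ (hx p hp) (hy q hq))

theorem IsBoundedIn.iUnion (hx : SmallInitialSegments id s) (hy : SmallInitialSegments g s)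
    (hg : InjOn g s) (hκ : ℵ₀ ≤ #s) {ι : Type u} {C : ι → Set α} (hι : #ι < (#s).ord.cof)
    (hC : ∀ i, IsBoundedIn s g (C i)) : IsBoundedIn s g (⋃ i, C i) := by
  choose p hp q hq hpq using hC
  obtain ⟨p', hp', hpp'⟩ := hx.exists_forall_lt (injOn_id s) hκ p hp hι
  obtain ⟨q', hq', hqq'⟩ := hy.exists_forall_lt hg hκ q hq hι
  refine ⟨p', hp', q', hq', fun x hxC => ?_⟩
  obtain ⟨i, hxi⟩ := mem_iUnion.1 hxC
  exact ⟨(hpq i x hxi).1.trans (hpp' i), (hpq i x hxi).2.trans (hqq' i)⟩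

section Singular

variable [WellFoundedLT α] [WellFoundedLT β]

theorem exists_isBoundedIn_strictMonoOn (hsing : (#s).IsSingular) (hg : InjOn g s)
    (IH : ∀ t ⊆ s, ℵ₀ ≤ #t → #t < #s → ∃ u ⊆ t, #u = #t ∧ StrictMonoOn g u)
    {A : Set α} (hA : A ⊆ s) (hAcard : #A = #s) {ν : Cardinal} (hν₀ : ℵ₀ ≤ ν) (hν : ν < #s) :
    ∃ C ⊆ A, #C = ν ∧ StrictMonoOn g C ∧ IsBoundedIn s g C := by
  obtain ⟨p, hpA, hp⟩ := exists_le_mk_setOf_lt (injOn_id A)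
    (hAcard ▸ hsing.isSuccLimit.succ_lt hν : Order.succ ν < #A)
  obtain ⟨q, hqA, hq⟩ := exists_le_mk_setOf_lt (hg.mono ((sep_subset A _).trans hA))
    ((Order.lt_succ ν).trans_le hp)
  obtain ⟨C₀, hC₀, hC₀card⟩ := le_mk_iff_exists_subset.1 hq
  obtain ⟨C, hC, hCcard, hCmono⟩ :=
    IH C₀ (fun x hx => hA (hC₀ hx).1.1) (hC₀card ▸ hν₀) (hC₀card ▸ hν)
  exact ⟨C, fun x hx => (hC₀ (hC hx)).1.1, hCcard.trans hC₀card, hCmono, p, hA hpA, q, hA hqA.1,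
    fun x hx => ⟨(hC₀ (hC hx)).1.2, (hC₀ (hC hx)).2⟩⟩

theorem exists_strictMonoOn_of_isSingular (hsing : (#s).IsSingular) (hg : InjOn g s)
    (IH : ∀ t ⊆ s, ℵ₀ ≤ #t → #t < #s → ∃ u ⊆ t, #u = #t ∧ StrictMonoOn g u)
    (hx : SmallInitialSegments id s) (hy : SmallInitialSegments g s) :
    ∃ u ⊆ s, #u = #s ∧ StrictMonoOn g u := by
  have hκ := hsing.aleph0_le
  obtain ⟨S, hS, hStype⟩ := Ordinal.exists_ord_cof_eq s
  have hcof : Order.cof s = (#s).ord.cof := by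
    rw [← Ordinal.cof_type, (smallInitialSegments_id_iff s).1 hx]
  have hScard : #S = Order.cof s := by
    rw [← Ordinal.card_type (α := S) (· < ·), hStype, card_ord]
  have hIio : ∀ i : S, #(Iio i) < (#s).ord.cof := fun i =>
    hcof ▸ hScard ▸ mk_Iio_lt i (by rw [hScard, hStype])
  let ν : S → Cardinal := fun i => max ℵ₀ #{y ∈ s | y < ((i : s) : α)}
  have hν : ∀ i, ℵ₀ ≤ ν i ∧ ν i < #s := fun i => ⟨le_max_left _ _,
    max_lt (hκ.lt_of_ne fun h => hsing.not_isRegular (h ▸ isRegular_aleph0)) (hx _ i.1.2)⟩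
  have hνcof : ∀ c < #s, ∃ i, c < ν i := by
    intro c hc
    obtain ⟨x, hxs, hcx⟩ := exists_le_mk_setOf_lt (injOn_id s) (hsing.isSuccLimit.succ_lt hc)
    obtain ⟨i, hiS, hxi⟩ := hS ⟨x, hxs⟩
    refine ⟨⟨i, hiS⟩, (Order.lt_succ c).trans_le (hcx.trans ((mk_le_mk_of_subset ?_).trans
      (le_max_right _ _)))⟩
    exact fun y hy => ⟨hy.1, hy.2.trans_le hxi⟩
  obtain ⟨B, hB⟩ := exists_transfinite_choice (X := Set α)
    (fun i prev C => C ⊆ upperRegion s g (⋃ j, prev j) ∧ #C = ν i ∧ StrictMonoOn g C ∧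
      IsBoundedIn s g C)
    fun i prev hprev => exists_isBoundedIn_strictMonoOn hsing hg IH (sep_subset _ _)
      (mk_upperRegion hx hy hκ (IsBoundedIn.iUnion hx hy hg hκ (hIio i) fun j => (hprev j).2.2.2))
      (hν i).1 (hν i).2
  have hBs : (⋃ i, B i) ⊆ s := iUnion_subset fun i => (hB i).1.trans (sep_subset _ _)
  refine ⟨⋃ i, B i, hBs, (mk_le_mk_of_subset hBs).antisymm (not_lt.1 fun hlt => ?_), ?_⟩
  · obtain ⟨i, hi⟩ := hνcof _ hlt
    exact hi.not_ge ((hB i).2.1 ▸ mk_le_mk_of_subset (subset_iUnion B i))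
  · intro x hx y hy hxy
    obtain ⟨i, hxi⟩ := mem_iUnion.1 hx
    obtain ⟨j, hyj⟩ := mem_iUnion.1 hy
    rcases lt_trichotomy i j with hij | rfl | hji
    · exact (((hB j).1 hyj).2 x (mem_iUnion.2 ⟨⟨i, hij⟩, hxi⟩)).2
    · exact (hB i).2.2.1 hxi hyj hxy
    · exact absurd hxy (((hB i).1 hxi).2 y (mem_iUnion.2 ⟨⟨j, hji⟩, hyj⟩)).1.not_gt

end Singular

end WellOrder

theorem exists_subset_card_eq_strictMonoOn {α : Type u} {β : Type*} [LinearOrder α]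
    [WellFoundedLT α] [LinearOrder β] [WellFoundedLT β] {s : Set α} {g : α → β}
    (hs : ℵ₀ ≤ #s) (hg : InjOn g s) : ∃ u ⊆ s, #u = #s ∧ StrictMonoOn g u := by
  induction hκ : #s using WellFoundedLT.induction generalizing s with
  | ind κ IH =>
    obtain ⟨t₁, ht₁s, ht₁, hy₁⟩ := exists_subset_smallInitialSegments g s
    obtain ⟨t, htt₁, ht, hx⟩ := exists_subset_smallInitialSegments id t₁
    have htcard : #t = #s := ht.trans ht₁
    have hgt := hg.mono (htt₁.trans ht₁s)
    suffices ∃ u ⊆ t, #u = #t ∧ StrictMonoOn g u by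
      obtain ⟨u, hut, hu, hmono⟩ := this
      exact ⟨u, hut.trans (htt₁.trans ht₁s), hu.trans (htcard.trans hκ), hmono⟩
    rcases isRegular_or_isSingular (htcard ▸ hs) with hreg | hsing
    · exact exists_strictMonoOn_of_isRegular_s5 hreg hx hgt
    · refine exists_strictMonoOn_of_isSingular hsing hgt (fun t' ht' h0 hlt => ?_) hx
        (hy₁.mono htt₁ ht)
      exact IH _ (hκ ▸ htcard ▸ hlt) h0 (hgt.mono ht') rfl

open scoped Ordinal in
theorem otpEq_ord_iff {s : Set Ordi} {κ : Cardi} :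
    OtpEq s κ.ord ↔ #s = Cardinal.lift.{1} κ ∧ SmallInitialSegments id s := by
  have hotp : OtpEq s κ.ord ↔ typeLT s = (Cardinal.lift.{1} κ).ord := by
    rw [← lift_ord, ← Ordinal.type_lt_Iio]
    exact ⟨fun ⟨e⟩ => e.ordinalType_congr,
      fun h => let ⟨e⟩ := Ordinal.type_eq.1 h; ⟨OrderIso.ofRelIsoLT e⟩⟩
  rw [hotp, smallInitialSegments_id_iff]
  constructor
  · intro h
    have hcard : #s = Cardinal.lift.{1} κ := by
      rw [← Ordinal.card_type (α := s) (· < ·), h, card_ord]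
    exact ⟨hcard, hcard ▸ h⟩
  · rintro ⟨hcard, h⟩
    rwa [← hcard]

theorem PFun.dom_restrict {α β : Type*} (f : α →. β) {p : Set α} (H : p ⊆ f.Dom) :
    (f.restrict H).Dom = p :=
  rfl

theorem exists_restrict_pfInc {f : Ordi →. Ordi} {κ : Cardi} (hκ : ℵ₀ ≤ κ) (hf : PFInj f)
    (hdom : OtpEq f.Dom κ.ord) :
    ∃ (u : Set Ordi) (hu : u ⊆ f.Dom), PFInc (f.restrict hu) ∧ OtpEq u κ.ord := by
  classical
  let g : Ordi → Ordi := fun a => if h : a ∈ f.Dom then (f a).get h else 0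
  have hgf : ∀ a ∈ f.Dom, g a ∈ f a := fun a ha => by
    simp only [g, dif_pos ha]
    exact Part.get_mem ha
  obtain ⟨hcard, hsmall⟩ := otpEq_ord_iff.1 hdom
  obtain ⟨u, hu, hucard, hmono⟩ := exists_subset_card_eq_strictMonoOn (g := g)
    (hcard ▸ aleph0_le_lift.2 hκ) fun a ha b hb hab =>
      hf a b (g a) (hgf a ha) (by rw [hab]; exact hgf b hb)
  refine ⟨u, hu, fun a b c d hc hd hab => ?_,
    otpEq_ord_iff.2 ⟨hucard.trans hcard, hsmall.mono hu hucard⟩⟩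
  rw [PFun.mem_restrict] at hc hd
  rw [← Part.mem_unique (hgf a (hu hc.1)) hc.2, ← Part.mem_unique (hgf b (hu hd.1)) hd.2]
  exact hmono hc.1 hd.1 hab

theorem stmt_5_general (lam kap : Cardi) (h0 : ℵ₀ ≤ kap)
    (h : Ps' lam kap.ord) : Ps lam kap := by
  obtain ⟨F, hFcard, hF, hFdisj, hFext⟩ := h
  choose u hu hinc hotp using fun f : F => exists_restrict_pfInc h0 (hF f f.2).2.1 (hF f f.2).2.2
  refine ⟨range fun f : F => (f : Ordi →. Ordi).restrict (hu f), mk_range_le.trans hFcard,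
    ?_, ?_, ?_⟩
  · rintro _ ⟨f, rfl⟩
    obtain ⟨⟨hdom, hran⟩, -⟩ := hF f f.2
    refine ⟨⟨?_, fun a b hb => hran a b ((PFun.mem_restrict _ _ _).1 hb).2⟩, hinc f, ?_⟩
    · exact fun a ha => hdom (hu f ha)
    · rw [PFun.dom_restrict]
      exact hotp f
  · rintro _ ⟨f, rfl⟩ _ ⟨f', rfl⟩ hne
    have hff' : (f : Ordi →. Ordi) ≠ f' := fun h => hne (by rw [Subtype.ext h])
    obtain ⟨⟨c, hc, hlt⟩, -⟩ := hFdisj f f.2 f' f'.2 hff'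
    obtain ⟨hcard, hsmall⟩ := otpEq_ord_iff.1 (hF f f.2).2.2
    rw [PFun.dom_restrict, PFun.dom_restrict, ← hcard]
    refine (mk_le_mk_of_subset ?_).trans_lt (hsmall c hc)
    exact fun x hx => ⟨hu f hx.1, hlt x ⟨hu f hx.1, hu f' hx.2⟩⟩
  · intro g hg hginj
    obtain ⟨f, hf, hext⟩ := hFext g hg hginj
    exact ⟨_, ⟨⟨f, hf⟩, rfl⟩, fun a b hb => hext a b ((PFun.mem_restrict _ _ _).1 hb).2⟩

/-- Ps'(λ, κ) implies Ps(λ, κ). -/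
theorem stmt_5 (lam kap : Cardi) (h0 : ℵ₀ ≤ kap) (h1 : kap < lam)
    (h : Ps' lam kap.ord) : Ps lam kap :=
  stmt_5_general lam kap h0 h
end

section
/- If δ < λ is a limit ordinal and λ^{|δ|} = λ, then Ps'(λ, δ) holds. -/
open Cardinal Set

/-!
Since `λ ^ |δ| = λ`, König's theorem gives `|δ| < cf λ`, and the tree of sequences of length `< δ`
in `λ` has only `λ` nodes. Code its nodes injectively by ordinals below `λ` so that codes strictly
increase along branches: the code of `s ↾ α` is `P (sup of the earlier codes + 1, s ↾ α)` for a
greedily built injection `P` with `x ≤ P (x, n)`; the supremum stays below `λ` because `|α| < cf λ`.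
Each injective `u : δ → λ` gives the partial function sending the code of `u ↾ α` to `u α`. Two
distinct branches share only nodes below their splitting level, and for an injective `g : λ → λ`
the branch defined by `u α = g (code of u ↾ α)` yields a member of the family extended by `g`.
-/

universe u

theorem exists_fixedPoint_of_dependsOnLT {ι X : Type*} [LT ι] [WellFoundedLT ι] [Nonempty X]
    (Φ : (ι → X) → ι → X) (hΦ : ∀ u v i, (∀ j < i, u j = v j) → Φ u i = Φ v i) :
    ∃ u, Φ u = u := by
  classical
  let u := wellFounded_lt.fix fun i IH =>
    Φ (fun j => if h : j < i then IH j h else Classical.arbitrary X) i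
  refine ⟨u, funext fun i => ?_⟩
  rw [show u i = _ from wellFounded_lt.fix_eq _ i]
  exact hΦ _ _ _ fun j hj => by rw [dif_pos hj]

namespace Cardinal

theorem exists_lt_ord_notMem {κ : Cardinal.{u}} (hκ : ℵ₀ ≤ κ) {x : Ordinal.{u}} (hx : x < κ.ord)
    {S : Set Ordinal.{u}} (hS : #S < lift.{u + 1} κ) : ∃ η, x ≤ η ∧ η < κ.ord ∧ η ∉ S := by
  by_contra! H
  have hsub : Iio κ.ord ⊆ Iio x ∪ S := fun η hη =>
    or_iff_not_imp_left.2 fun h => H η (not_lt.1 h) hη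
  have := (mk_le_mk_of_subset hsub).trans (mk_union_le _ _)
  rw [mk_Iio_ordinal, mk_Iio_ordinal, card_ord] at this
  exact this.not_gt (add_lt_of_lt (aleph0_le_lift.2 hκ) (lift_lt.2 (lt_ord.1 hx)) hS)

theorem exists_injective_le_self {κ : Cardinal.{u}} (hκ : ℵ₀ ≤ κ) (h : Iio κ.ord → Iio κ.ord) :
    ∃ G : Iio κ.ord → Iio κ.ord, Function.Injective G ∧ ∀ ξ, h ξ ≤ G ξ := by
  -- `G ξ` is chosen greedily; fewer than `κ` values are taken before `ξ`, so a choice exists.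
  let A (G : Iio κ.ord → Ordinal.{u}) (ξ : Iio κ.ord) : Set Ordinal.{u} :=
    {η | (h ξ : Ordinal) ≤ η ∧ η < κ.ord ∧ ∀ ζ < ξ, G ζ ≠ η}
  obtain ⟨G, hG⟩ := exists_fixedPoint_of_dependsOnLT (fun G ξ => sInf (A G ξ))
    fun G G' ξ hGG' => by simp +contextual only [A, hGG']
  have hmem (ξ : Iio κ.ord) : G ξ ∈ A G ξ := by
    rw [show G ξ = sInf (A G ξ) from congrFun hG.symm ξ]
    refine csInf_mem ?_
    have hS : #(G '' Iio ξ) < lift.{u + 1} κ := by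
      refine mk_image_le.trans_lt ((mk_le_of_injective (f := fun ζ : Iio ξ =>
        (⟨ζ.1, ζ.2⟩ : Iio (ξ : Ordinal))) fun a b hab => ?_).trans_lt ?_)
      · exact Subtype.ext (Subtype.ext (congrArg Subtype.val hab :))
      · rw [mk_Iio_ordinal]; exact lift_lt.2 (lt_ord.1 ξ.2)
    obtain ⟨η, hle, hlt, hη⟩ := exists_lt_ord_notMem hκ (h ξ).2 hS
    exact ⟨η, hle, hlt, fun ζ hζ hGη => hη ⟨ζ, hζ, hGη⟩⟩
  refine ⟨fun ξ => ⟨G ξ, (hmem ξ).2.1⟩, Function.Injective.of_lt_imp_ne fun ζ ξ hζξ hGG => ?_,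
    fun ξ => (hmem ξ).1⟩
  exact (hmem ξ).2.2 ζ hζξ (congrArg Subtype.val hGG)

theorem exists_injective_le {κ : Cardinal.{u}} (hκ : ℵ₀ ≤ κ) {X : Type (u + 1)}
    (hX : #X = lift.{u + 1} κ) (h : X → Iio κ.ord) :
    ∃ G : X → Iio κ.ord, Function.Injective G ∧ ∀ x, h x ≤ G x := by
  obtain ⟨e⟩ : Nonempty (X ≃ Iio κ.ord) := Cardinal.eq.1 (by rw [hX, mk_Iio_ordinal, card_ord])
  obtain ⟨G, hG, hle⟩ := exists_injective_le_self hκ (h ∘ e.symm)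
  exact ⟨G ∘ e, hG.comp e.injective, fun x => by simpa using hle (e x)⟩

theorem mk_arrow_eq_of_power_eq {κ : Cardinal.{u}} {δ : Ordinal.{u}}
    (h : κ ^ δ.card = κ) {Z : Type (u + 1)} (hZ : #Z = lift.{u + 1} κ) :
    #(Iio δ → Z) = lift.{u + 1} κ := by
  rw [mk_arrow, lift_id, lift_id, hZ, mk_Iio_ordinal, ← lift_power, h]

theorem card_lt_cof_ord_of_power_eq {κ : Cardinal.{u}} {δ : Ordinal.{u}} (hκ : ℵ₀ ≤ κ)
    (h : κ ^ δ.card = κ) : δ.card < κ.ord.cof := by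
  by_contra! hcof
  have := (lt_power_cof_ord hκ).trans_le (power_le_power_left (aleph0_pos.trans_le hκ).ne' hcof)
  exact this.ne h.symm

end Cardinal

section TreeCode

variable {ι X Y : Type*} [LinearOrder ι]

/-- The node `s ↾ α` of the tree of sequences in `X`; `none` marks the positions past `α`, so that
the length `α` can be read off the node. -/
def restrictBelow (α : ι) (s : ι → X) : ι → Option X :=
  fun β => if β < α then some (s β) else none

theorem restrictBelow_congr {α : ι} {s t : ι → X} (h : ∀ β < α, s β = t β) :
    restrictBelow α s = restrictBelow α t :=
  funext fun β => by by_cases hβ : β < α <;> simp [restrictBelow, hβ, h]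

theorem restrictBelow_eq_restrictBelow {α β : ι} {s t : ι → X}
    (h : restrictBelow α s = restrictBelow β t) : α = β ∧ ∀ γ < α, s γ = t γ := by
  have hlen : α = β := by
    by_contra hne
    rcases lt_or_gt_of_ne hne with hlt | hlt
    · simpa [restrictBelow, hlt] using congrFun h α
    · simpa [restrictBelow, hlt] using congrFun h β
  subst hlen
  exact ⟨rfl, fun γ hγ => by simpa [restrictBelow, hγ] using congrFun h γ⟩

/-- `F α s` is the code of the node `s ↾ α`. -/
structure IsTreeCode [Preorder Y] (F : ι → (ι → X) → Y) : Prop where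
  strictMono (s : ι → X) : StrictMono (F · s)
  congr {α : ι} {s t : ι → X} : (∀ β < α, s β = t β) → F α s = F α t
  eq_of_eq {α β : ι} {s t : ι → X} : F α s = F β t → α = β ∧ ∀ γ < α, s γ = t γ

namespace IsTreeCode

variable [Preorder Y] {F : ι → (ι → X) → Y}

theorem exists_eq_apply_code [WellFoundedLT ι] [Nonempty X] (hF : IsTreeCode F) (g : Y → X) :
    ∃ u : ι → X, ∀ α, u α = g (F α u) := by
  obtain ⟨u, hu⟩ := exists_fixedPoint_of_dependsOnLT (fun u α => g (F α u))
    fun u v α h => by rw [hF.congr h]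
  exact ⟨u, fun α => (congrFun hu α).symm⟩

theorem exists_bound [NoMaxOrder ι] (hF : IsTreeCode F) {s t : ι → X} (hst : s ≠ t) :
    ∃ c, ∀ α β, F α s = F β t → α < c ∧ β < c := by
  obtain ⟨γ, hγ⟩ := Function.ne_iff.1 hst
  obtain ⟨c, hc⟩ := exists_gt γ
  refine ⟨c, fun α β hαβ => ?_⟩
  obtain ⟨rfl, hagree⟩ := hF.eq_of_eq hαβ
  have hαγ : α ≤ γ := not_lt.1 fun hγα => hγ (hagree γ hγα)
  exact ⟨hαγ.trans_lt hc, hαγ.trans_lt hc⟩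

end IsTreeCode

end TreeCode

theorem Ordinal.iSup_Iio_add_one_lt_of_card_lt_cof {δ μ : Ordinal.{u}} (hδ : δ.card < μ.cof)
    (α : Iio δ) {c : Iio α → Ordinal.{u}} (hc : ∀ β, c β < μ) : ⨆ β, c β + 1 < μ := by
  refine Ordinal.lift_iSup_add_one_lt_of_lt_cof ?_ hc
  rw [← lift_cof, Cardinal.lift_id'.{u, u + 1}]
  calc #(Iio α) ≤ #(Iio δ) := mk_set_le _
    _ = Cardinal.lift δ.card := Cardinal.mk_Iio_ordinal δ
    _ < Cardinal.lift μ.cof := Cardinal.lift_lt.2 hδ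

theorem exists_isTreeCode {κ : Cardinal.{u}} {δ : Ordinal.{u}} (hκ : ℵ₀ ≤ κ)
    (h : κ ^ δ.card = κ) : ∃ F : Iio δ → (Iio δ → Iio κ.ord) → Iio κ.ord, IsTreeCode F := by
  have hμ : #(Iio κ.ord) = lift.{u + 1} κ := by rw [mk_Iio_ordinal, card_ord]
  have hnodes : #(Iio κ.ord × (Iio δ → Option (Iio κ.ord))) = lift.{u + 1} κ := by
    rw [mk_prod, lift_id, lift_id, hμ, Cardinal.mk_arrow_eq_of_power_eq h
      (by rw [mk_option, hμ, add_one_eq (aleph0_le_lift.2 hκ)]), mul_eq_self (aleph0_le_lift.2 hκ)]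
  obtain ⟨P, hPinj, hPle⟩ := Cardinal.exists_injective_le hκ hnodes Prod.fst
  have hcof := Cardinal.card_lt_cof_ord_of_power_eq hκ h
  let code (F : Iio δ → (Iio δ → Iio κ.ord) → Iio κ.ord) (α : Iio δ) (s : Iio δ → Iio κ.ord) :
      Iio κ.ord :=
    P (⟨⨆ β : Iio α, (F β s : Ordinal) + 1,
      Ordinal.iSup_Iio_add_one_lt_of_card_lt_cof hcof α fun β => (F β s).2⟩, restrictBelow α s)
  have : Nonempty (Iio κ.ord) := ⟨⟨⊥, (isSuccLimit_ord hκ).bot_lt⟩⟩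
  obtain ⟨F, hF⟩ := exists_fixedPoint_of_dependsOnLT (fun F α => code F α) fun F F' α h => by
    have h' : ∀ β : Iio α, F β = F' β := fun β => h β β.2
    simp only [code, h']
  have hFcode (α : Iio δ) (s : Iio δ → Iio κ.ord) : F α s = code F α s :=
    (congrFun (congrFun hF α) s).symm
  have hcongr (α : Iio δ) : ∀ s t : Iio δ → Iio κ.ord, (∀ β < α, s β = t β) → F α s = F α t := by
    induction α using WellFoundedLT.induction with
    | _ α IH =>
      intro s t hst
      have hlt : ∀ β : Iio α, F β s = F β t := fun β =>
        IH β β.2 s t fun γ hγ => hst γ (hγ.trans β.2)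
      rw [hFcode α s, hFcode α t]
      simp only [code, hlt, restrictBelow_congr hst]
  refine ⟨F, fun s β α hβα => ?_, hcongr _ _ _, fun {α β s t} hαβ => ?_⟩
  · calc (F β s : Ordinal) < F β s + 1 := lt_add_one _
      _ ≤ ⨆ γ : Iio α, (F γ s : Ordinal) + 1 := Ordinal.le_iSup (fun γ : Iio α => _) ⟨β, hβα⟩
      _ ≤ F α s := by rw [hFcode α s]; exact hPle _
  · rw [hFcode, hFcode] at hαβ
    exact restrictBelow_eq_restrictBelow (congrArg Prod.snd (hPinj hαβ))

/-- The partial function `E i ↦ u i`, i.e. `u ∘ E⁻¹`. -/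
noncomputable def compInv {ι α β : Type*} (u : ι → β) (E : ι → α) : α →. β :=
  fun a => ⟨∃ i, E i = a, fun h => u h.choose⟩

theorem mem_compInv {ι α β : Type*} {u : ι → β} {E : ι → α} (hE : Function.Injective E) {a : α}
    {b : β} : b ∈ compInv u E a ↔ ∃ i, E i = a ∧ u i = b := by
  refine ⟨fun ⟨h, hb⟩ => ⟨h.choose, h.choose_spec, hb⟩, fun ⟨i, hi, hb⟩ => ⟨⟨i, hi⟩, ?_⟩⟩
  have hex : ∃ i, E i = a := ⟨i, hi⟩
  have hi' : hex.choose = i := hE (hex.choose_spec.trans hi.symm)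
  simp only [compInv, hi', hb]

section Branch

variable {lam : Cardi} {δ : Ordi}

noncomputable def branchPFun (F : Iio δ → (Iio δ → Iio lam.ord) → Iio lam.ord)
    (u : Iio δ → Iio lam.ord) : Ordi →. Ordi :=
  compInv (fun α => (u α : Ordi)) (fun α => (F α u : Ordi))

variable {F : Iio δ → (Iio δ → Iio lam.ord) → Iio lam.ord}

namespace IsTreeCode

theorem strictMono_coe (hF : IsTreeCode F) (u : Iio δ → Iio lam.ord) :
    StrictMono fun α => (F α u : Ordi) :=
  (Subtype.strictMono_coe _).comp (hF.strictMono u)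

theorem mem_branchPFun (hF : IsTreeCode F) {u : Iio δ → Iio lam.ord} {a b : Ordi} :
    b ∈ branchPFun F u a ↔ ∃ α, (F α u : Ordi) = a ∧ (u α : Ordi) = b :=
  mem_compInv (hF.strictMono_coe u).injective

theorem branchPFun_spec (hF : IsTreeCode F) {u : Iio δ → Iio lam.ord} (hu : Function.Injective u) :
    PFDomRan lam (branchPFun F u) ∧ PFInj (branchPFun F u) ∧ OtpEq (branchPFun F u).Dom δ := by
  refine ⟨⟨?_, fun a b hb => ?_⟩, fun a b c ha hb => ?_, ⟨((hF.strictMono_coe u).orderIso _).symm⟩⟩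
  · rintro _ ⟨α, rfl⟩
    exact (F α u).2
  · obtain ⟨α, -, rfl⟩ := hF.mem_branchPFun.1 hb
    exact (u α).2
  · obtain ⟨α, rfl, rfl⟩ := hF.mem_branchPFun.1 ha
    obtain ⟨β, rfl, hβ⟩ := hF.mem_branchPFun.1 hb
    rw [hu (Subtype.ext hβ)]

theorem branchPFun_bounded [NoMaxOrder (Iio δ)] (hF : IsTreeCode F) {u v : Iio δ → Iio lam.ord}
    (huv : u ≠ v) :
    (∃ c ∈ (branchPFun F u).Dom, ∀ x ∈ (branchPFun F u).Dom ∩ (branchPFun F v).Dom, x < c) ∧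
      (∃ c ∈ (branchPFun F v).Dom, ∀ x ∈ (branchPFun F u).Dom ∩ (branchPFun F v).Dom, x < c) := by
  obtain ⟨c, hc⟩ := hF.exists_bound huv
  refine ⟨⟨F c u, ⟨c, rfl⟩, ?_⟩, ⟨F c v, ⟨c, rfl⟩, ?_⟩⟩ <;>
    rintro _ ⟨⟨α, rfl⟩, β, hβ⟩ <;> have hαβ := hc α β (Subtype.ext hβ.symm)
  · exact hF.strictMono_coe u hαβ.1
  · exact hβ ▸ hF.strictMono_coe v hαβ.2

theorem exists_branchPFun_totalExt [Nonempty (Iio lam.ord)] (hF : IsTreeCode F)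
    {g : Ordi → Ordi} (hg : TotalFn lam g) (hginj : TotalInj lam g) :
    ∃ u, Function.Injective u ∧ TotalExt g (branchPFun F u) := by
  obtain ⟨u, hu⟩ := hF.exists_eq_apply_code fun y => ⟨g y, hg y y.2⟩
  refine ⟨u, fun α β hαβ => (hF.strictMono_coe u).injective ?_, fun a b hb => ?_⟩
  · have hgαβ : g (F α u) = g (F β u) := by simpa [hu α, hu β] using congrArg Subtype.val hαβ
    exact hginj (F α u).2 (F β u).2 hgαβ
  · obtain ⟨α, rfl, rfl⟩ := hF.mem_branchPFun.1 hb
    exact congrArg Subtype.val (hu α).symm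

end IsTreeCode

end Branch

/-- If `δ < λ` is a limit ordinal and `λ ^ |δ| = λ` then Ps'(λ, δ) holds. -/
theorem stmt_6 (lam : Cardi) (δ : Ordi) (hlim : Order.IsSuccLimit δ) (hδ : δ < lam.ord)
    (h : lam ^ δ.card = lam) : Ps' lam δ := by
  have hκ : ℵ₀ ≤ lam := by
    simpa using (lt_ord.1 ((Ordinal.omega0_le_of_isSuccLimit hlim).trans_lt hδ)).le
  obtain ⟨F, hF⟩ := exists_isTreeCode hκ h
  have : NoMaxOrder (Iio δ) := hlim.isSuccPrelimit.noMaxOrder_Iio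
  have : Nonempty (Iio lam.ord) := ⟨⟨δ, hδ⟩⟩
  refine ⟨range fun u : {u : Iio δ → Iio lam.ord // Function.Injective u} => branchPFun F u.1,
    ?_, ?_, ?_, ?_⟩
  · exact mk_range_le.trans ((mk_subtype_le _).trans
      (Cardinal.mk_arrow_eq_of_power_eq h (by simp)).le)
  · rintro _ ⟨u, rfl⟩
    exact hF.branchPFun_spec u.2
  · rintro _ ⟨u, rfl⟩ _ ⟨v, rfl⟩ hne
    exact hF.branchPFun_bounded fun huv => hne (by rw [Subtype.ext huv])
  · intro g hg hginj
    obtain ⟨u, hu, hext⟩ := hF.exists_branchPFun_totalExt hg hginj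
    exact ⟨_, ⟨⟨u, hu⟩, rfl⟩, hext⟩
end

section
/- If χ = λ ≥ μ > |α| and λ₁ < λ implies λ₁^{|α|} < λ, then Pr₃(χ, λ, μ, α) holds. -/
open Cardinal Set

/-! For infinite `λ`, let `θ = |α|⁺` and take all partial functions with domain a subset of `θ` of
order type `α` and values below some `i < λ`: for fixed `i` there are at most `(θ·|i|)^|α| < λ` of
them. A function `g : μ → λ` extends one of them: either `g` is bounded below `λ` on `α`, or the
values `g j`, `j < α`, are cofinal in `λ`, and then `θ` is covered by the `|α|` sets
`{x < θ | g x ≤ g j}`, one of which has size `θ` and so contains a set of order type `α`.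
For finite `λ` the hypothesis forces `|α| ≤ 1`, and all functions on `α` suffice. -/

theorem otpEq_Iio (δ : Ordi) : OtpEq (Iio δ) δ :=
  ⟨OrderIso.refl _⟩

theorem exists_subset_otpEq_of_lift_card_lt_mk {S : Set Ordi} {α : Ordi}
    (h : lift α.card < #S) : ∃ D ⊆ S, OtpEq D α := by
  let r : S → S → Prop := (· < ·)
  have hα : Ordinal.lift.{1} α ≤ Ordinal.type r := by
    by_contra! hlt
    have := Ordinal.card_le_card hlt.le
    rw [Ordinal.card_type, ← Ordinal.lift_card] at this
    exact h.not_ge this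
  have hlt (β : Iio α) : Ordinal.lift.{1} β.1 < Ordinal.type r :=
    (Ordinal.lift_lt.2 β.2).trans_le hα
  let e : Iio α → Ordi := fun β => (Ordinal.enum r ⟨_, hlt β⟩ : S)
  have he : StrictMono e := fun β₁ β₂ hβ =>
    show r _ _ from Ordinal.enum_lt_enum.2 (Subtype.mk_lt_mk.2 (Ordinal.lift_lt.2 hβ))
  refine ⟨range e, ?_, ⟨he.orderIso.symm⟩⟩
  rintro _ ⟨β, rfl⟩
  exact (Ordinal.enum r ⟨_, hlt β⟩).2

theorem PFun.dom_res {α β : Type*} (f : α → β) (s : Set α) : (PFun.res f s).Dom = s := by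
  ext x
  simp [PFun.mem_dom, PFun.mem_res]

theorem totalExt_res (g : Ordi → Ordi) (D : Set Ordi) : TotalExt g (PFun.res g D) :=
  fun _ _ h => ((PFun.mem_res g D _ _).1 h).2

theorem exists_lt_forall_lt_of_card_lt_cof {o α : Ordi} {g : Ordi → Ordi}
    (hα : α.card < o.cof) (hg : ∀ j < α, g j < o) : ∃ i < o, ∀ j < α, g j < i := by
  have hbdd : BddAbove (range fun j : Iio α => g j + 1) := Ordinal.bddAbove_of_small
  refine ⟨⨆ j : Iio α, g j + 1, Ordinal.lift_iSup_add_one_lt_of_lt_cof ?_ fun j => hg j j.2,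
    fun j hj => (Order.lt_add_one_iff.2 le_rfl).trans_le (le_ciSup hbdd ⟨j, hj⟩)⟩
  rwa [mk_Iio_ordinal, lift_lift, ← Ordinal.lift_cof, lift_lt]

def boundedPFuns (A : Set Ordi) (α i : Ordi) : Set (Ordi →. Ordi) :=
  {f | f.Dom ⊆ A ∧ OtpEq f.Dom α ∧ ∀ a b, b ∈ f a → b < i}

theorem res_mem_boundedPFuns {g : Ordi → Ordi} {A D : Set Ordi} {α i : Ordi} (hDA : D ⊆ A)
    (hD : OtpEq D α) (hg : ∀ x ∈ D, g x < i) : PFun.res g D ∈ boundedPFuns A α i := by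
  refine ⟨by rwa [PFun.dom_res], by rwa [PFun.dom_res], fun a b hb => ?_⟩
  obtain ⟨ha, rfl⟩ := (PFun.mem_res g D a b).1 hb
  exact hg a ha

theorem mk_boundedPFuns_le (A : Set Ordi) (α i : Ordi) :
    #(boundedPFuns A α i) ≤ (#A * lift i.card) ^ lift α.card := by
  let e (f : boundedPFuns A α i) : Iio α ≃o f.1.Dom := (Classical.choice f.2.2.1).symm
  let Φ (f : boundedPFuns A α i) (β : Iio α) : A × Iio i :=
    (⟨e f β, f.2.1 (e f β).2⟩, ⟨(f.1 (e f β)).get (e f β).2, f.2.2.2 _ _ (Part.get_mem _)⟩)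
  have hΦ {f f' : boundedPFuns A α i} (h : Φ f = Φ f') {a b : Ordi} (hb : b ∈ f.1 a) :
      b ∈ f'.1 a := by
    let β := (e f).symm ⟨a, (PFun.mem_dom _ _).2 ⟨b, hb⟩⟩
    have hdom : (e f' β : Ordi) = a := by
      simpa [Φ, β] using (congrArg (fun p => (p.1 : Ordi)) (congrFun h β)).symm
    have hval : (f'.1 (e f' β)).get (e f' β).2 = b := by
      simpa [Φ, β, Part.get_eq_of_mem hb] using
        (congrArg (fun p => (p.2 : Ordi)) (congrFun h β)).symm
    rw [← hdom, ← hval]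
    exact Part.get_mem _
  have hinj : Function.Injective Φ := fun f f' h =>
    Subtype.ext (PFun.ext fun _ _ => ⟨hΦ h, hΦ h.symm⟩)
  calc #(boundedPFuns A α i) ≤ #(Iio α → A × Iio i) := mk_le_of_injective hinj
    _ = (#A * lift i.card) ^ lift α.card := by
      rw [mk_arrow, mk_prod, mk_Iio_ordinal, mk_Iio_ordinal]
      simp only [lift_id]

theorem exists_otpEq_subset_forall_lt {o α : Ordi} {g : Ordi → Ordi} (ho : Order.IsSuccLimit o)
    (hg : ∀ x < (Order.succ α.card).ord, g x < o) :
    ∃ i < o, ∃ D ⊆ Iio (Order.succ α.card).ord, OtpEq D α ∧ ∀ x ∈ D, g x < i := by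
  have hαθ : α < (Order.succ α.card).ord := lt_ord.2 (Order.lt_succ _)
  by_cases hbdd : ∃ i < o, ∀ j < α, g j < i
  · obtain ⟨i, hio, hi⟩ := hbdd
    exact ⟨i, hio, Iio α, Iio_subset_Iio hαθ.le, otpEq_Iio α, hi⟩
  push Not at hbdd
  have hα : ℵ₀ ≤ α.card := by
    by_contra! hfin
    have hcof : ℵ₀ ≤ o.cof := Ordinal.aleph0_le_cof_iff.2 (Ordinal.one_lt_cof_iff.2 ho)
    obtain ⟨i, hio, hi⟩ := exists_lt_forall_lt_of_card_lt_cof (hfin.trans_le hcof)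
      fun j hj => hg j (hj.trans hαθ)
    obtain ⟨j, hj, hij⟩ := hbdd i hio
    exact (hi j hj).not_ge hij
  choose! J hJα hJ using fun x (hx : x < (Order.succ α.card).ord) => hbdd (g x) (hg x hx)
  let J' : Iio (Order.succ α.card).ord → Iio α := fun x => ⟨J x, hJα x x.2⟩
  have hcard : #(Iio α) < #(Iio (Order.succ α.card).ord) := by
    rw [mk_Iio_ordinal, mk_Iio_ordinal, card_ord, lift_lt]
    exact Order.lt_succ _
  obtain ⟨j, hj⟩ := infinite_pigeonhole_card_lt J' hcard (by
    rw [mk_Iio_ordinal, card_ord, ← lift_aleph0.{1, 0}, lift_le]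
    exact hα.trans (Order.le_succ _))
  rw [mk_Iio_ordinal] at hj
  obtain ⟨D, hDS, hD⟩ := exists_subset_otpEq_of_lift_card_lt_mk
    (hj.trans_le (mk_image_eq Subtype.val_injective).ge)
  refine ⟨Order.succ (g j), ho.succ_lt (hg j (j.2.trans hαθ)), D, ?_, hD, ?_⟩
  · intro _ hxD
    obtain ⟨⟨x, hx⟩, -, rfl⟩ := hDS hxD
    exact hx
  · intro _ hxD
    obtain ⟨⟨x, hx⟩, hxj : J' _ = j, rfl⟩ := hDS hxD
    rw [Order.lt_succ_iff, ← hxj]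
    exact hJ x hx

theorem succ_lt_of_forall_power_lt {lam κ : Cardi} (hlam : ℵ₀ ≤ lam)
    (hpow : ∀ l < lam, l ^ κ < lam) : Order.succ κ < lam :=
  (Order.succ_le_of_lt (cantor κ)).trans_lt (hpow 2 ((natCast_lt_aleph0 (n := 2)).trans_le hlam))

theorem pr3_self_of_aleph0_le {lam mu : Cardi} {α : Ordi} (hlam : ℵ₀ ≤ lam) (hμ : α.card < mu)
    (hpow : ∀ l < lam, l ^ α.card < lam) : Pr3 lam lam mu α := by
  set θ := (Order.succ α.card).ord
  have hθμ : θ ≤ mu.ord := ord_le_ord.2 (Order.succ_le_of_lt hμ)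
  have hfam (i : Iio lam.ord) : #(boundedPFuns (Iio θ) α i) ≤ lift lam := by
    refine (mk_boundedPFuns_le _ _ _).trans ?_
    rw [mk_Iio_ordinal, card_ord, ← lift_mul, ← lift_power, lift_le]
    exact (hpow _ (mul_lt_of_lt hlam (succ_lt_of_forall_power_lt hlam hpow) (lt_ord.1 i.2))).le
  refine ⟨⋃ i : Iio lam.ord, boundedPFuns (Iio θ) α i, ?_, fun f hf => ?_, fun g hg => ?_⟩
  · calc _ ≤ #(Iio lam.ord) * ⨆ i : Iio lam.ord, #(boundedPFuns (Iio θ) α i) := mk_iUnion_le _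
      _ ≤ lift lam * lift lam := by
        rw [mk_Iio_ordinal, card_ord]
        exact mul_le_mul_right (ciSup_le' hfam) _
      _ = lift lam := by rw [← lift_mul, mul_eq_self hlam]
  · obtain ⟨i, hf⟩ := mem_iUnion.1 hf
    exact ⟨hf.1.trans (Iio_subset_Iio hθμ), fun a b hb => (hf.2.2 a b hb).trans i.2, hf.2.1⟩
  · obtain ⟨i, hi, D, hDθ, hD, hgD⟩ := exists_otpEq_subset_forall_lt (isSuccLimit_ord hlam)
      fun x hx => hg x (hx.trans_le hθμ)
    exact ⟨_, mem_iUnion.2 ⟨⟨i, hi⟩, res_mem_boundedPFuns hDθ hD hgD⟩, totalExt_res g D⟩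

theorem Nat.mul_pow_le_of_sub_one_pow_lt {n k : ℕ} (hk : k < n) (h : (n - 1) ^ k < n) :
    (k * n) ^ k ≤ n := by
  rcases k with _ | _ | k
  · rw [pow_zero]
    exact hk
  · simp
  · have : n ≤ (n - 1) ^ 2 := by
      obtain ⟨m, rfl⟩ := Nat.exists_eq_add_of_lt hk
      simp only [Nat.add_sub_cancel]
      nlinarith
    exact absurd h (this.trans (Nat.pow_le_pow_right (by omega) (by omega))).not_gt

theorem mul_power_le_of_lt_aleph0 {lam κ : Cardi} (hlam : lam < ℵ₀) (hκ : κ < lam)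
    (hpow : ∀ l < lam, l ^ κ < lam) : (κ * lam) ^ κ ≤ lam := by
  obtain ⟨n, rfl⟩ := lt_aleph0.1 hlam
  obtain ⟨k, rfl⟩ := lt_aleph0.1 (hκ.trans hlam)
  have hk : k < n := by exact_mod_cast hκ
  have h := hpow (n - 1 : ℕ) (by exact_mod_cast (show n - 1 < n by omega))
  rw [power_natCast] at h ⊢
  exact_mod_cast Nat.mul_pow_le_of_sub_one_pow_lt hk (by exact_mod_cast h)

theorem pr3_of_mul_power_le {chi lam mu : Cardi} {α : Ordi} (hμ : α.card < mu)
    (hchi : (α.card * lam) ^ α.card ≤ chi) : Pr3 chi lam mu α := by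
  have hαμ : α ≤ mu.ord := (lt_ord.2 hμ).le
  refine ⟨boundedPFuns (Iio α) α lam.ord, ?_,
    fun f hf => ⟨hf.1.trans (Iio_subset_Iio hαμ), hf.2.2, hf.2.1⟩, fun g hg => ⟨_,
      res_mem_boundedPFuns subset_rfl (otpEq_Iio α) fun x hx => hg x (hx.trans_le hαμ),
      totalExt_res g _⟩⟩
  refine (mk_boundedPFuns_le _ _ _).trans ?_
  rw [mk_Iio_ordinal, card_ord, ← lift_mul, ← lift_power, lift_le]
  exact hchi

/-- If `χ = λ ≥ μ > |α|` and `λ₁ < λ → λ₁ ^ |α| < λ` then Pr₃(χ, λ, μ, α) holds. -/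
theorem stmt_9 (chi lam mu : Cardi) (α : Ordi)
    (h1 : chi = lam) (h2 : mu ≤ lam) (h3 : α.card < mu)
    (h4 : ∀ lam1 : Cardi, lam1 < lam → lam1 ^ α.card < lam) :
    Pr3 chi lam mu α := by
  subst chi
  rcases lt_or_ge lam ℵ₀ with hfin | hinf
  · exact pr3_of_mul_power_le h3 (mul_power_le_of_lt_aleph0 hfin (h3.trans_le h2) h4)
  · exact pr3_self_of_aleph0_le hinf h3 h4
end

section
/- Assume λ ≥ 2^κ ≥ θ ≥ κ ≥ ℵ₀ and λ = λ^κ. Then in 𝔥_{λ, κ, θ} there is no ste-universal graph; moreover the witnessing counterexamples can be taken bipartite. -/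
open Cardinal Set

/-!
Given `G*`, the counterexample lives on the tree `κ>λ` together with its branches `κλ`: the
branch `η` is joined to the nodes `η ↾ i` for `i` in a set `B η ⊆ κ`. Two distinct branches
have fewer than `κ` common neighbours, so no `K_{κ,θ}` embeds weakly. If `f` embedded the graph
strongly into `G*`, let `η` be the branch with `η i = f (η ↾ i)`; then `B η` is the pattern
`{i | f η ~ η i}`. So it suffices to take for `B η` a pattern realized by no vertex of `G*`:
otherwise the `2 ^ κ ≥ θ` patterns containing a fixed `κ`-set `S` are realized by distinct
vertices, all adjacent to `η '' S`.
-/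

lemma NoKbip.comap {V W : Type} {G : SimpleGraph W} {κ θ : Cardi} (hG : NoKbip G κ θ)
    {f : V → W} (hf : Function.Injective f) : NoKbip (G.comap f) κ θ := by
  rintro ⟨A, B, hAB, hA, hB, hadj⟩
  exact hG ⟨f '' A, f '' B, (disjoint_image_iff hf).2 hAB, by rwa [mk_image_eq hf],
    by rwa [mk_image_eq hf], forall_mem_image.2 fun a ha => forall_mem_image.2 fun b hb =>
      hadj a ha b hb⟩

lemma IsBipartite.comap {V W : Type*} {G : SimpleGraph W} (hG : IsBipartite G) (f : V → W) :
    IsBipartite (G.comap f) :=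
  let ⟨s, hs⟩ := hG
  ⟨f ⁻¹' s, fun a b hab => hs (f a) (f b) hab⟩

lemma StrongEmb.comp_equiv_symm {V W X : Type*} {G : SimpleGraph W} {H : SimpleGraph X}
    (e : V ≃ W) {f : V → X} (hf : StrongEmb (G.comap e) H f) : StrongEmb G H (f ∘ e.symm) :=
  ⟨hf.1.comp e.symm.injective, fun a b => by simpa using hf.2 (e.symm a) (e.symm b)⟩

lemma noKbip_of_commonNeighbors_lt {V : Type} {G : SimpleGraph V} {P : Set V} {κ θ : Cardi}
    (hP : ∀ a b, G.Adj a b → (a ∈ P ↔ b ∉ P))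
    (hcommon : ∀ x ∈ P, ∀ y ∈ P, x ≠ y → #(G.commonNeighbors x y) < κ)
    (hκ : 1 < κ) (hκθ : κ ≤ θ) : NoKbip G κ θ := by
  rintro ⟨A, B, -, hA, hB, hadj⟩
  have hsmall : ∀ X Y : Set V, X ⊆ P → 1 < #X → (∀ x ∈ X, ∀ y ∈ Y, G.Adj x y) → #Y < κ := by
    intro X Y hXP hX hXY
    have hXnt : X.Nontrivial := nontrivial_coe_sort.1 (one_lt_iff_nontrivial.1 hX)
    obtain ⟨x, hx, x', hx', hne⟩ := hXnt
    have hY : Y ⊆ G.commonNeighbors x x' := fun y hy =>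
      (G.mem_commonNeighbors).2 ⟨hXY x hx y hy, hXY x' hx' y hy⟩
    exact (mk_le_mk_of_subset hY).trans_lt (hcommon x (hXP hx) x' (hXP hx') hne)
  have hA1 : 1 < #A := hA ▸ hκ
  have hB1 : 1 < #B := hA1.trans_le (hA ▸ hB ▸ hκθ)
  have hAne : A.Nonempty := nonempty_coe_sort.1 (mk_ne_zero_iff.1 (zero_lt_one.trans hA1).ne')
  have hBne : B.Nonempty := nonempty_coe_sort.1 (mk_ne_zero_iff.1 (zero_lt_one.trans hB1).ne')
  obtain ⟨a, ha⟩ := hAne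
  obtain ⟨b, hb⟩ := hBne
  by_cases haP : a ∈ P
  · have hbP : b ∉ P := (hP a b (hadj a ha b hb)).1 haP
    have hAP : A ⊆ P := fun a' ha' => (hP a' b (hadj a' ha' b hb)).2 hbP
    exact (hsmall A B hAP hA1 hadj).not_ge (hB ▸ hκθ)
  · have hBP : B ⊆ P := fun b' hb' => not_not.1 (mt (hP a b' (hadj a ha b' hb')).2 haP)
    exact (hsmall B A hBP hB1 fun b' hb' a' ha' => (hadj a' ha' b' hb').symm).ne hA

section Tree

variable {ι α : Type} [Preorder ι]

/-- The node `η ↾ i` at level `i` is `Sum.inl ⟨i, η ↾ Iio i⟩`; the branches are `Sum.inr η`. -/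
abbrev TreeVertex (ι α : Type) [Preorder ι] := (Σ i : ι, (Iio i → α)) ⊕ (ι → α)

def node (η : ι → α) (i : ι) : TreeVertex ι α := Sum.inl ⟨i, fun j => η j⟩

lemma eq_and_forall_lt_of_node_eq {η η' : ι → α} {i i' : ι} (h : node η i = node η' i') :
    i = i' ∧ ∀ j < i, η j = η' j := by
  have hsig := Sum.inl_injective h
  obtain rfl : i = i' := congrArg Sigma.fst hsig
  exact ⟨rfl, fun j hj => congrFun (eq_of_heq (Sigma.ext_iff.1 hsig).2) ⟨j, hj⟩⟩

def treeGraph (B : (ι → α) → Set ι) : SimpleGraph (TreeVertex ι α) :=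
  SimpleGraph.fromRel fun u w => ∃ η, ∃ i ∈ B η, u = node η i ∧ w = Sum.inr η

variable {B : (ι → α) → Set ι}

lemma treeGraph_adj_inr_iff {u : TreeVertex ι α} {η : ι → α} :
    (treeGraph B).Adj u (Sum.inr η) ↔ ∃ i ∈ B η, u = node η i := by
  simp only [treeGraph, SimpleGraph.fromRel_adj]
  constructor
  · rintro ⟨-, ⟨η', i, hi, rfl, h⟩ | ⟨η', i, -, h, -⟩⟩
    · obtain rfl := Sum.inr_injective h
      exact ⟨i, hi, rfl⟩
    · simp [node] at h
  · rintro ⟨i, hi, rfl⟩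
    exact ⟨by simp [node], Or.inl ⟨η, i, hi, rfl, rfl⟩⟩

lemma treeGraph_adj_mem_range_inr_iff {u w : TreeVertex ι α} (h : (treeGraph B).Adj u w) :
    u ∈ range Sum.inr ↔ w ∉ range Sum.inr := by
  simp only [treeGraph, SimpleGraph.fromRel_adj] at h
  rcases h with ⟨-, ⟨η, i, -, rfl, rfl⟩ | ⟨η, i, -, rfl, rfl⟩⟩ <;> simp [node]

lemma isBipartite_treeGraph : IsBipartite (treeGraph B) :=
  ⟨range Sum.inr, fun _ _ => treeGraph_adj_mem_range_inr_iff⟩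

lemma mk_treeVertex (hι : ℵ₀ ≤ #ι) (hα : 2 ≤ #α) : #(TreeVertex ι α) = #α ^ #ι := by
  have hιX : #ι ≤ #α ^ #ι := (cantor _).le.trans (power_le_power_right hα)
  have hX : ℵ₀ ≤ #α ^ #ι := hι.trans hιX
  have hnode : ∀ i : ι, #(Iio i → α) ≤ #α ^ #ι := fun i => by
    rw [← power_def]
    exact power_le_power_left (two_pos.trans_le hα).ne' (mk_set_le _)
  refine le_antisymm ?_ (by rw [power_def]; exact mk_le_of_injective Sum.inr_injective)
  calc #(TreeVertex ι α) = (sum fun i : ι => #(Iio i → α)) + #α ^ #ι := by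
        rw [mk_sum, mk_sigma, lift_id, lift_id, power_def]
    _ ≤ #ι * #α ^ #ι + #α ^ #ι := by
        gcongr
        exact (sum_le_sum _ _ hnode).trans_eq (sum_const' _ _)
    _ = #α ^ #ι := by
        rw [mul_eq_right hX hιX (aleph0_pos.trans_le hι).ne', add_eq_self hX]

lemma exists_branch_eq_comp_node [WellFoundedLT ι] (F : TreeVertex ι α → α) :
    ∃ η : ι → α, ∀ i, η i = F (node η i) :=
  ⟨IsWellFounded.fix (· < ·) fun i IH => F (Sum.inl ⟨i, fun j => IH j.1 j.2⟩),
    IsWellFounded.fix_eq _ _⟩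

lemma not_strongEmb_treeGraph [WellFoundedLT ι] {H : SimpleGraph α}
    (hB : ∀ η, Function.Injective η → ∀ v, {i | H.Adj v (η i)} ≠ B η)
    (F : TreeVertex ι α → α) : ¬ StrongEmb (treeGraph B) H F := by
  rintro ⟨hF, hadj⟩
  obtain ⟨η, hη⟩ := exists_branch_eq_comp_node F
  have hη_inj : Function.Injective η := fun i i' h =>
    (eq_and_forall_lt_of_node_eq (hF (by rwa [hη i, hη i'] at h))).1
  refine hB η hη_inj (F (Sum.inr η)) (Set.ext fun i => ?_)
  rw [mem_ofPred_eq, hη i, H.adj_comm, ← hadj, treeGraph_adj_inr_iff]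
  constructor
  · rintro ⟨i', hi', h⟩
    rwa [(eq_and_forall_lt_of_node_eq h).1]
  · exact fun hi => ⟨i, hi, rfl⟩

end Tree

section LinearTree

variable {ι α : Type} [LinearOrder ι] {B : (ι → α) → Set ι}

lemma treeGraph_commonNeighbors_subset {η η' : ι → α} {j : ι} (hj : η j ≠ η' j) :
    (treeGraph B).commonNeighbors (Sum.inr η) (Sum.inr η') ⊆ node η '' Iic j := by
  intro u hu
  rw [SimpleGraph.mem_commonNeighbors, SimpleGraph.adj_comm, treeGraph_adj_inr_iff,
    SimpleGraph.adj_comm, treeGraph_adj_inr_iff] at hu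
  obtain ⟨⟨i, -, rfl⟩, i', -, h⟩ := hu
  exact ⟨i, not_lt.1 fun hji => hj ((eq_and_forall_lt_of_node_eq h).2 j hji), rfl⟩

lemma noKbip_treeGraph {κ θ : Cardi} (hκ : 1 < κ) (hκθ : κ ≤ θ) (hι : ∀ j : ι, #(Iic j) < κ)
    (B : (ι → α) → Set ι) : NoKbip (treeGraph B) κ θ := by
  refine noKbip_of_commonNeighbors_lt (fun _ _ => treeGraph_adj_mem_range_inr_iff) ?_ hκ hκθ
  rintro _ ⟨η, rfl⟩ _ ⟨η', rfl⟩ hne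
  obtain ⟨j, hj⟩ := Function.ne_iff.1 fun h => hne (congrArg Sum.inr h)
  exact (mk_le_mk_of_subset (treeGraph_commonNeighbors_subset hj)).trans_lt
    (mk_image_le.trans_lt (hι j))

end LinearTree

lemma exists_set_ne_adj_pattern {V ι : Type} {G : SimpleGraph V} {κ θ : Cardi}
    (hG : NoKbip G κ θ) (hθ : θ ≤ 2 ^ κ) (hι : #ι = κ) (hκ : ℵ₀ ≤ κ) {η : ι → V}
    (hη : Function.Injective η) : ∃ B : Set ι, ∀ v, {i | G.Adj v (η i)} ≠ B := by
  by_contra! hall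
  obtain ⟨q⟩ : Nonempty (ι ⊕ ι ≃ ι) := Cardinal.eq.1 (by rw [mk_sum, lift_id, hι, add_eq_self hκ])
  -- `pattern U` is the left copy of `ι` together with `U` placed in the right copy
  let pattern (U : Set ι) : Set ι := {x | Sum.elim (fun _ => True) (· ∈ U) (q.symm x)}
  choose v hv using fun U => hall (pattern U)
  have hv_inj : Function.Injective v := fun U U' h => Set.ext fun a => by
    have hpat : pattern U = pattern U' := by rw [← hv U, ← hv U', h]
    simpa [pattern] using congrArg (q (Sum.inr a) ∈ ·) hpat
  have hθv : θ ≤ #(range v) := by rwa [mk_range_eq _ hv_inj, mk_set, hι]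
  obtain ⟨C, hCv, hC⟩ := le_mk_iff_exists_subset.1 hθv
  have hadj : ∀ a U, G.Adj (η (q (Sum.inl a))) (v U) := fun a U => by
    have h : q (Sum.inl a) ∈ pattern U := by simp [pattern]
    rw [← hv U] at h
    exact h.symm
  refine hG ⟨range (η ∘ q ∘ Sum.inl), C, disjoint_left.2 ?_, ?_, hC, ?_⟩
  · rintro _ ⟨a, rfl⟩ hc
    obtain ⟨U, hU⟩ := hCv hc
    exact G.loopless.irrefl _ (hU ▸ hadj a U)
  · rw [mk_range_eq _ (hη.comp (q.injective.comp Sum.inl_injective)), hι]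
  · rintro _ ⟨a, rfl⟩ c hc
    obtain ⟨U, rfl⟩ := hCv hc
    exact hadj a U

/-- If `λ ≥ 2^κ ≥ θ ≥ κ ≥ ℵ₀` and `λ = λ^κ`, then in `𝔥_{λ,κ,θ}` there is no ste-universal
graph; moreover the counterexamples can be taken bipartite. -/
theorem stmt_15 (lam th kap : Cardi) (h0 : ℵ₀ ≤ kap) (h1 : kap ≤ th)
    (h2 : th ≤ (2 : Cardi) ^ kap) (h3 : (2 : Cardi) ^ kap ≤ lam)
    (h4 : lam ^ kap = lam) :
    ∀ Gstar : SimpleGraph (Ordinal.ToType lam.ord), NoKbip Gstar kap th →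
      ∃ G : SimpleGraph (Ordinal.ToType lam.ord), NoKbip G kap th ∧
        IsBipartite G ∧ ∀ f, ¬ StrongEmb G Gstar f := by
  intro Gstar hGstar
  have hB : ∀ η : kap.ord.ToType → lam.ord.ToType, ∃ B : Set kap.ord.ToType,
      Function.Injective η → ∀ v, {i | Gstar.Adj v (η i)} ≠ B := fun η => by
    by_cases hη : Function.Injective η
    · obtain ⟨B, hB⟩ := exists_set_ne_adj_pattern hGstar h2 (mk_ord_toType kap) h0 hη
      exact ⟨B, fun _ => hB⟩
    · exact ⟨∅, fun h => (hη h).elim⟩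
  choose B hB using hB
  have h2lam : 2 ≤ #lam.ord.ToType := by
    rw [mk_ord_toType]
    exact ofNat_le_aleph0.trans (h0.trans ((cantor kap).le.trans h3))
  obtain ⟨e⟩ : Nonempty (lam.ord.ToType ≃ TreeVertex kap.ord.ToType lam.ord.ToType) :=
    Cardinal.eq.1 (by rw [mk_treeVertex (by rwa [mk_ord_toType]) h2lam]; simp [h4])
  have hIic : ∀ j : kap.ord.ToType, #(Iic j) < kap := fun j => by
    simpa using mk_Iic_lt j (by simp) (by simpa using h0)
  exact ⟨(treeGraph B).comap e,
    (noKbip_treeGraph (one_lt_aleph0.trans_le h0) h1 hIic B).comap e.injective,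
    isBipartite_treeGraph.comap e,
    fun f hf => not_strongEmb_treeGraph hB _ (hf.comp_equiv_symm e)⟩
end
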